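/- arXiv:1712.04877 — 3 statements merged into one kernel-verified Lean document; each statement's English description precedes it below -/
import Mathlib

section
/- The reflected planar random walk started away from the corners does not reach the extremities of the diagonal before the boundary: for every δ > 0 and every ε > 0, limsup_{N→∞} sup { h_N(𝐤) : 𝐤 ∈ B_N, ‖𝐤‖ > δN, ‖(N,N)−𝐤‖ > δN } = 0. -/
open Set

namespace BoundaryDriven

/-- The discrete Laplacian on `ℤ²`. -/
def lap2 (f : ℤ × ℤ → ℝ) (x : ℤ × ℤ) : ℝ :=
  f (x.1 + 1, x.2) + f (x.1 - 1, x.2) + f (x.1, x.2 + 1) + f (x.1, x.2 - 1) - 4 * f x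

/-- The diagonal "gradient" `(∇₂f)(k,l) = f(k−1,l) + f(k,l+1) − 2f(k,l)`. -/
def ref2 (f : ℤ × ℤ → ℝ) (x : ℤ × ℤ) : ℝ :=
  f (x.1 - 1, x.2) + f (x.1, x.2 + 1) - 2 * f x

/-- `n̂ = ⌊N^{3/4}⌋`. -/
noncomputable def nhat (N : ℕ) : ℤ := ⌊(N : ℝ) ^ ((3 : ℝ) / 4)⌋

/-- The bulk set `B_N = {(k,l) : p+1 < k < max(n̂, l−1), n̂ < l < N}`. -/
def memB (p N : ℕ) (x : ℤ × ℤ) : Prop :=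
  (p : ℤ) + 1 < x.1 ∧ x.1 < max (nhat N) (x.2 - 1) ∧ nhat N < x.2 ∧ x.2 < (N : ℤ)

/-- The diagonal boundary `D_N = {(k,k+1) : n̂ ≤ k ≤ N−2}`. -/
def memD (N : ℕ) (x : ℤ × ℤ) : Prop :=
  x.2 = x.1 + 1 ∧ nhat N ≤ x.1 ∧ x.1 ≤ (N : ℤ) - 2

/-- The vertical boundary `V_N = {(p+1,l) : n̂ < l < N}`. -/
def memV (p N : ℕ) (x : ℤ × ℤ) : Prop :=
  x.1 = (p : ℤ) + 1 ∧ nhat N < x.2 ∧ x.2 < (N : ℤ)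

/-- The lower horizontal boundary `H_{l,N} = {(k,n̂) : p+1 ≤ k < n̂}`. -/
def memHl (p N : ℕ) (x : ℤ × ℤ) : Prop :=
  x.2 = nhat N ∧ (p : ℤ) + 1 ≤ x.1 ∧ x.1 < nhat N

/-- The upper horizontal boundary `H_{u,N} = {(k,N) : p+1 ≤ k ≤ N−2}`. -/
def memHu (p N : ℕ) (x : ℤ × ℤ) : Prop :=
  x.2 = (N : ℤ) ∧ (p : ℤ) + 1 ≤ x.1 ∧ x.1 ≤ (N : ℤ) - 2

/-- The boundary `∂B_N = V_N ∪ H_{l,N} ∪ H_{u,N}`. -/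
def memBd (p N : ℕ) (x : ℤ × ℤ) : Prop := memV p N x ∨ memHl p N x ∨ memHu p N x

/-- The extremities `D̃_{N,ε}` of the diagonal:
`{(k,k+1) ∈ D_N : k ≤ N^{1−ε/4} or k ≥ N − N^{1−ε/4}}`. -/
def memDtil (N : ℕ) (ε : ℝ) (x : ℤ × ℤ) : Prop :=
  memD N x ∧ ((x.1 : ℝ) ≤ (N : ℝ) ^ (1 - ε / 4) ∨ (N : ℝ) - (N : ℝ) ^ (1 - ε / 4) ≤ (x.1 : ℝ))

/-!
For `v = |z - c|²`, the profile `φ v = -(log v) / 2 - 1 / v` makes `z ↦ φ |z - c|²` strictly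
superharmonic for `Δ₂` away from `c`. Putting one pole on the diagonal line `l = k + 1` just
below the domain and one just above it, the reflection symmetry of each pole turns `∇₂` into
`Δ₂ / 2` on `D_N`, so the sum of the two poles is a strict supersolution of the reflected problem.
Normalised by the gap `φ (2 (Q + 2)²) - φ (2 N²)` with `Q = N ^ s ≥ N ^ (1 - ε/4)`, `s < 1`, it
is `≥ 1` on `D̃_{N,ε}` and `≥ 0` on `∂B_N`, so it dominates `h_N` by the maximum principle. At
points at distance at least `δN / 2` from both poles it is at most `log (8 / δ²)` divided by the
gap, and the gap grows like `(1 - s) log N`.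
-/

open Filter

noncomputable def barrierProfile (v : ℝ) : ℝ := -Real.log v / 2 - 1 / v

theorem barrierProfile_sub_le {v w : ℝ} (hv : 0 < v) (hvw : v ≤ w) :
    barrierProfile v - barrierProfile w ≤ Real.log (w / v) / 2 := by
  have : 1 / w ≤ 1 / v := one_div_le_one_div_of_le hv hvw
  rw [Real.log_div (by linarith) hv.ne']
  unfold barrierProfile
  linarith

theorem barrierProfile_antitoneOn : AntitoneOn barrierProfile (Ici 2) := by
  intro v (hv : 2 ≤ v) w (hw : 2 ≤ w) hvw
  have hv0 : 0 < v := by linarith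
  have hw0 : 0 < w := by linarith
  -- `log (w / v) ≥ 1 - v / w` dominates the difference `1 / v - 1 / w` once `v ≥ 2`
  have hlog : 1 - v / w ≤ Real.log (w / v) := by
    have := Real.log_le_sub_one_of_pos (div_pos hv0 hw0)
    rw [Real.log_div hv0.ne' hw0.ne'] at this
    rw [Real.log_div hw0.ne' hv0.ne']
    linarith
  have hkey : 1 / v - 1 / w ≤ (1 - v / w) / 2 := by
    rw [div_sub_div _ _ hv0.ne' hw0.ne', one_sub_div hw0.ne', div_div,
      div_le_div_iff₀ (by positivity) (by positivity)]
    nlinarith [mul_nonneg (mul_nonneg (sub_nonneg.2 hvw) hw0.le) (sub_nonneg.2 hv)]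
  rw [Real.log_div hw0.ne' hv0.ne'] at hlog
  unfold barrierProfile
  linarith

theorem barrierProfile_le_of_one_le {v w : ℝ} (hv : 1 ≤ v) (hvw : v ≤ w) (hw : 8 ≤ w) :
    barrierProfile w ≤ barrierProfile v := by
  rcases le_total 2 v with h2v | hv2
  · exact barrierProfile_antitoneOn h2v (by simp only [mem_Ici]; linarith) hvw
  -- on `[1, 2]` the profile stays above `-1`, while beyond `8` it is below `-1`
  have hw_le : barrierProfile w ≤ -1 := by
    have h8 : Real.log 8 ≤ Real.log w := Real.log_le_log (by norm_num) hw
    have h2 : Real.log 8 = 3 * Real.log 2 := by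
      rw [show (8 : ℝ) = 2 ^ 3 by norm_num, Real.log_pow]; norm_num
    have := Real.log_two_gt_d9
    have : 0 < 1 / w := by positivity
    unfold barrierProfile
    linarith
  have hv_ge : -1 ≤ barrierProfile v := by
    have hv0 : 0 < v := by linarith
    have hlog := Real.log_le_sub_one_of_pos hv0
    have hinv : 1 / v ≤ (3 - v) / 2 := by
      rw [div_le_div_iff₀ hv0 two_pos]; nlinarith
    unfold barrierProfile
    linarith
  linarith

theorem barrierProfile_four_point_lt {X Y : ℝ} (h : 2 ≤ X ^ 2 + Y ^ 2) :
    barrierProfile ((X + 1) ^ 2 + Y ^ 2) + barrierProfile ((X - 1) ^ 2 + Y ^ 2)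
      + barrierProfile (X ^ 2 + (Y + 1) ^ 2) + barrierProfile (X ^ 2 + (Y - 1) ^ 2)
      - 4 * barrierProfile (X ^ 2 + Y ^ 2) < 0 := by
  set u := X ^ 2 + Y ^ 2 with hu_def
  have hu : 0 < u := by linarith
  have h12 : 0 < ((X + 1) ^ 2 + Y ^ 2) * ((X - 1) ^ 2 + Y ^ 2) := by
    nlinarith [sq_nonneg Y, sq_nonneg (u - 1)]
  have h34 : 0 < (X ^ 2 + (Y + 1) ^ 2) * (X ^ 2 + (Y - 1) ^ 2) := by
    nlinarith [sq_nonneg X, sq_nonneg (u - 1)]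
  have hq1 : 0 < (X + 1) ^ 2 + Y ^ 2 := pos_of_mul_pos_left h12 (by positivity)
  have hq2 : 0 < (X - 1) ^ 2 + Y ^ 2 := pos_of_mul_pos_right h12 (by positivity)
  have hq3 : 0 < X ^ 2 + (Y + 1) ^ 2 := pos_of_mul_pos_left h34 (by positivity)
  have hq4 : 0 < X ^ 2 + (Y - 1) ^ 2 := pos_of_mul_pos_right h34 (by positivity)
  set P := ((X + 1) ^ 2 + Y ^ 2) * ((X - 1) ^ 2 + Y ^ 2) *
    ((X ^ 2 + (Y + 1) ^ 2) * (X ^ 2 + (Y - 1) ^ 2)) with hP_def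
  have hP : 0 < P := mul_pos h12 h34
  have hP_eq : P = (u ^ 2 - 1) ^ 2 + 16 * X ^ 2 * Y ^ 2 := by rw [hP_def, hu_def]; ring
  have hlog : Real.log ((X + 1) ^ 2 + Y ^ 2) + Real.log ((X - 1) ^ 2 + Y ^ 2)
      + Real.log (X ^ 2 + (Y + 1) ^ 2) + Real.log (X ^ 2 + (Y - 1) ^ 2) = Real.log P := by
    rw [hP_def, Real.log_mul h12.ne' h34.ne', Real.log_mul hq1.ne' hq2.ne',
      Real.log_mul hq3.ne' hq4.ne']
    ring
  have hinv : 1 / ((X + 1) ^ 2 + Y ^ 2) + 1 / ((X - 1) ^ 2 + Y ^ 2)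
      + 1 / (X ^ 2 + (Y + 1) ^ 2) + 1 / (X ^ 2 + (Y - 1) ^ 2)
      = 4 * (u + 1) * (u ^ 2 + 1) / P := by
    rw [hP_def, hu_def]
    field_simp
    ring
  have hlogP : 1 - u ^ 4 / P ≤ Real.log P - 4 * Real.log u := by
    have := Real.log_le_sub_one_of_pos (div_pos (pow_pos hu 4) hP)
    rw [Real.log_div (by positivity) hP.ne', Real.log_pow] at this
    push_cast at this
    linarith
  have hpoly : u * (u ^ 4 - P) + 8 * P - 8 * u * (u + 1) * (u ^ 2 + 1) < 0 := by
    have hT : 16 * X ^ 2 * Y ^ 2 ≤ 4 * u ^ 2 := by nlinarith [sq_nonneg (X ^ 2 - Y ^ 2)]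
    rw [hP_eq]
    nlinarith [mul_nonneg (mul_nonneg hu.le hu.le) (sub_nonneg.2 h), mul_pos hu hu,
      mul_nonneg hu.le (by positivity : (0 : ℝ) ≤ 16 * X ^ 2 * Y ^ 2)]
  calc _ = -(Real.log P - 4 * Real.log u) / 2 - 4 * (u + 1) * (u ^ 2 + 1) / P + 4 / u := by
        rw [← hlog, ← hinv]; unfold barrierProfile; ring
    _ ≤ -(1 - u ^ 4 / P) / 2 - 4 * (u + 1) * (u ^ 2 + 1) / P + 4 / u := by linarith
    _ = (u * (u ^ 4 - P) + 8 * P - 8 * u * (u + 1) * (u ^ 2 + 1)) / (2 * u * P) := by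
        field_simp; ring
    _ < 0 := div_neg_of_neg_of_pos hpoly (by positivity)

def sqDist (c z : ℤ × ℤ) : ℤ := (z.1 - c.1) ^ 2 + (z.2 - c.2) ^ 2

noncomputable def pole (c z : ℤ × ℤ) : ℝ := barrierProfile (sqDist c z)

theorem one_le_sqDist {c z : ℤ × ℤ} (h : z ≠ c) : 1 ≤ sqDist c z := by
  unfold sqDist
  rcases eq_or_ne z.1 c.1 with h1 | h1
  · have h2 : z.2 - c.2 ≠ 0 := sub_ne_zero.2 fun h2 => h (Prod.ext h1 h2)
    nlinarith [sq_nonneg (z.1 - c.1), pow_pos (abs_pos.2 h2) 2, sq_abs (z.2 - c.2)]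
  · have h1 : z.1 - c.1 ≠ 0 := sub_ne_zero.2 h1
    nlinarith [sq_nonneg (z.2 - c.2), pow_pos (abs_pos.2 h1) 2, sq_abs (z.1 - c.1)]

theorem sq_le_sqDist {c z : ℤ × ℤ} {r : ℝ} (hr : 0 ≤ r)
    (h : r ≤ |((z.1 - c.1 : ℤ) : ℝ)| ∨ r ≤ |((z.2 - c.2 : ℤ) : ℝ)|) :
    r ^ 2 ≤ sqDist c z := by
  unfold sqDist
  push_cast at h ⊢
  rcases h with h | h
  · nlinarith [pow_le_pow_left₀ hr h 2, sq_abs ((z.1 : ℝ) - c.1), sq_nonneg ((z.2 : ℝ) - c.2)]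
  · nlinarith [pow_le_pow_left₀ hr h 2, sq_abs ((z.2 : ℝ) - c.2), sq_nonneg ((z.1 : ℝ) - c.1)]

theorem sqDist_le {c z : ℤ × ℤ} {N : ℤ} (hc : c ∈ Icc (0, 0) (N, N)) (hz : z ∈ Icc (0, 0) (N, N)) :
    sqDist c z ≤ 2 * N ^ 2 := by
  obtain ⟨⟨hc1, hc2⟩, hc3, hc4⟩ := hc
  obtain ⟨⟨hz1, hz2⟩, hz3, hz4⟩ := hz
  simp only at *
  unfold sqDist
  nlinarith

theorem lap2_pole_neg {c z : ℤ × ℤ} (h : 2 ≤ sqDist c z) : lap2 (pole c) z < 0 := by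
  have key := barrierProfile_four_point_lt (X := ((z.1 - c.1 : ℤ) : ℝ))
    (Y := ((z.2 - c.2 : ℤ) : ℝ)) (by exact_mod_cast h)
  simp only [lap2, pole, sqDist]
  push_cast at key ⊢
  ring_nf at key ⊢
  exact key

theorem ref2_pole_eq_half_lap2 {c z : ℤ × ℤ} (h : z.1 - c.1 = z.2 - c.2) :
    ref2 (pole c) z = lap2 (pole c) z / 2 := by
  have hz2 : z.2 = z.1 - c.1 + c.2 := by omega
  have e1 : sqDist c (z.1 + 1, z.2) = sqDist c (z.1, z.2 + 1) := by
    simp only [sqDist]; rw [hz2]; ring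
  have e2 : sqDist c (z.1, z.2 - 1) = sqDist c (z.1 - 1, z.2) := by
    simp only [sqDist]; rw [hz2]; ring
  simp only [ref2, lap2, pole]
  rw [e1, e2]
  ring

theorem nonpos_of_forall_pos_exists_gt {α : Type*} {S : Set α} (hS : S.Finite) {u : α → ℝ}
    (h : ∀ z ∈ S, 0 < u z → ∃ w ∈ S, u z < u w) : ∀ z ∈ S, u z ≤ 0 := by
  intro z hz
  obtain ⟨m, hm, hmax⟩ := Set.exists_max_image S u hS ⟨z, hz⟩
  by_contra! hpos
  obtain ⟨w, hw, hlt⟩ := h m hm (hpos.trans_le (hmax z hz))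
  exact (hmax w hw).not_gt hlt

theorem exists_gt_of_lap2_pos {S : Set (ℤ × ℤ)} {u : ℤ × ℤ → ℝ} {z : ℤ × ℤ}
    (h₁ : (z.1 + 1, z.2) ∈ S) (h₂ : (z.1 - 1, z.2) ∈ S) (h₃ : (z.1, z.2 + 1) ∈ S)
    (h₄ : (z.1, z.2 - 1) ∈ S) (h : 0 < lap2 u z) : ∃ w ∈ S, u z < u w := by
  by_contra! hle
  unfold lap2 at h
  linarith [hle _ h₁, hle _ h₂, hle _ h₃, hle _ h₄]

theorem exists_gt_of_ref2_pos {S : Set (ℤ × ℤ)} {u : ℤ × ℤ → ℝ} {z : ℤ × ℤ}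
    (h₁ : (z.1 - 1, z.2) ∈ S) (h₂ : (z.1, z.2 + 1) ∈ S) (h : 0 < ref2 u z) :
    ∃ w ∈ S, u z < u w := by
  by_contra! hle
  unfold ref2 at h
  linarith [hle _ h₁, hle _ h₂]

def walkDomain (p N : ℕ) : Set (ℤ × ℤ) := {z | memB p N z ∨ memD N z ∨ memBd p N z}

section walkDomain

variable {p N : ℕ}

theorem walkDomain_subset_Icc (hp : (p : ℤ) + 3 ≤ nhat N) (hN : nhat N ≤ N - 2) :
    walkDomain p N ⊆ Icc (0, 0) (N, N) := by
  intro z hz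
  simp only [walkDomain, mem_ofPred_eq, memB, memD, memBd, memV, memHl, memHu, lt_max_iff] at hz
  simp only [mem_Icc, Prod.le_def]
  rcases hz with h | h | h | h | h <;> omega

theorem walkDomain_finite (hp : (p : ℤ) + 3 ≤ nhat N) (hN : nhat N ≤ N - 2) :
    (walkDomain p N).Finite :=
  (Set.finite_Icc _ _).subset (walkDomain_subset_Icc hp hN)

theorem neighbors_mem_walkDomain_of_memB (hN : nhat N ≤ N - 2) {z : ℤ × ℤ} (hz : memB p N z) :
    (z.1 + 1, z.2) ∈ walkDomain p N ∧ (z.1 - 1, z.2) ∈ walkDomain p N ∧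
      (z.1, z.2 + 1) ∈ walkDomain p N ∧ (z.1, z.2 - 1) ∈ walkDomain p N := by
  simp only [walkDomain, mem_ofPred_eq, memB, memD, memBd, memV, memHl, memHu, lt_max_iff] at hz ⊢
  omega

theorem neighbors_mem_walkDomain_of_memD (hp : (p : ℤ) + 3 ≤ nhat N) {z : ℤ × ℤ}
    (hz : memD N z) : (z.1 - 1, z.2) ∈ walkDomain p N ∧ (z.1, z.2 + 1) ∈ walkDomain p N := by
  simp only [walkDomain, mem_ofPred_eq, memB, memD, memBd, memV, memHl, memHu, lt_max_iff] at hz ⊢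
  omega

theorem le_of_lap2_lt_of_ref2_lt (hp : (p : ℤ) + 3 ≤ nhat N) (hN : nhat N ≤ N - 2)
    {A : Set (ℤ × ℤ)} {h g : ℤ × ℤ → ℝ} (hA : ∀ z ∈ A, h z ≤ g z)
    (hBd : ∀ z, memBd p N z → h z ≤ g z) (hB : ∀ z, memB p N z → lap2 g z < lap2 h z)
    (hD : ∀ z, memD N z → z ∉ A → ref2 g z < ref2 h z) :
    ∀ z ∈ walkDomain p N, h z ≤ g z := by
  have key := nonpos_of_forall_pos_exists_gt (walkDomain_finite hp hN) (u := h - g) ?_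
  · exact fun z hz => sub_nonpos.1 (key z hz)
  rintro z (hzB | hzD | hzBd) hpos
  · obtain ⟨h₁, h₂, h₃, h₄⟩ := neighbors_mem_walkDomain_of_memB hN hzB
    refine exists_gt_of_lap2_pos h₁ h₂ h₃ h₄ ?_
    have := hB z hzB
    simp only [lap2, Pi.sub_apply] at this ⊢
    linarith
  · by_cases hzA : z ∈ A
    · exact absurd (sub_nonpos.2 (hA z hzA)) hpos.not_ge
    obtain ⟨h₁, h₂⟩ := neighbors_mem_walkDomain_of_memD hp hzD
    refine exists_gt_of_ref2_pos h₁ h₂ ?_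
    have := hD z hzD hzA
    simp only [ref2, Pi.sub_apply] at this ⊢
    linarith
  · exact absurd (sub_nonpos.2 (hBd z hzBd)) hpos.not_ge

end walkDomain

noncomputable def lowerPole (N : ℕ) : ℤ × ℤ := (nhat N - 2, nhat N - 1)

def upperPole (N : ℕ) : ℤ × ℤ := ((N : ℤ) - 1, N)

noncomputable def barrierGap (N : ℕ) (Q : ℝ) : ℝ :=
  barrierProfile (2 * (Q + 2) ^ 2) - barrierProfile (2 * (N : ℝ) ^ 2)

noncomputable def barrier (N : ℕ) (Q : ℝ) (z : ℤ × ℤ) : ℝ :=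
  (pole (lowerPole N) z + pole (upperPole N) z - 2 * barrierProfile (2 * (N : ℝ) ^ 2)) /
    barrierGap N Q

section barrier

variable {p N : ℕ} {Q : ℝ} {c z : ℤ × ℤ}

theorem sqDist_pole_mem_Icc (hp : (p : ℤ) + 3 ≤ nhat N) (hN : nhat N ≤ N - 2)
    (hc : c = lowerPole N ∨ c = upperPole N) (hz : z ∈ walkDomain p N) :
    (sqDist c z : ℝ) ∈ Icc 1 (2 * (N : ℝ) ^ 2) := by
  have hzc : z ≠ c := by
    rintro rfl
    simp only [walkDomain, mem_ofPred_eq, memB, memD, memBd, memV, memHl, memHu,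
      lt_max_iff] at hz
    rcases hc with rfl | rfl <;> simp only [lowerPole, upperPole] at hz <;> omega
  have hcI : c ∈ Icc (0, 0) ((N : ℤ), (N : ℤ)) := by
    rcases hc with rfl | rfl <;> simp only [mem_Icc, Prod.le_def, lowerPole, upperPole] <;> omega
  have h₁ := one_le_sqDist hzc
  have h₂ := sqDist_le hcI (walkDomain_subset_Icc hp hN hz)
  exact ⟨by exact_mod_cast h₁, by exact_mod_cast h₂⟩

theorem barrierProfile_le_pole (hp : (p : ℤ) + 3 ≤ nhat N) (hN : nhat N ≤ N - 2)
    (hc : c = lowerPole N ∨ c = upperPole N) (hz : z ∈ walkDomain p N) :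
    barrierProfile (2 * (N : ℝ) ^ 2) ≤ pole c z := by
  obtain ⟨h₁, h₂⟩ := sqDist_pole_mem_Icc hp hN hc hz
  have hN2 : (2 : ℝ) ≤ N := by exact_mod_cast (by omega : (2 : ℤ) ≤ N)
  exact barrierProfile_le_of_one_le h₁ h₂ (by nlinarith)

theorem barrier_nonneg (hp : (p : ℤ) + 3 ≤ nhat N) (hN : nhat N ≤ N - 2)
    (hgap : 0 < barrierGap N Q) (hz : z ∈ walkDomain p N) : 0 ≤ barrier N Q z :=
  div_nonneg (by linarith [barrierProfile_le_pole hp hN (Or.inl rfl) hz,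
    barrierProfile_le_pole hp hN (Or.inr rfl) hz]) hgap.le

theorem one_le_barrier {ε : ℝ} (hp : (p : ℤ) + 3 ≤ nhat N) (hN : nhat N ≤ N - 2)
    (hgap : 0 < barrierGap N Q) (hQ : (N : ℝ) ^ (1 - ε / 4) ≤ Q) (hQ0 : 0 ≤ Q)
    (hz : memDtil N ε z) : 1 ≤ barrier N Q z := by
  have hzD : z ∈ walkDomain p N := Or.inr (Or.inl hz.1)
  suffices ∃ c, (c = lowerPole N ∨ c = upperPole N) ∧ (sqDist c z : ℝ) ≤ 2 * (Q + 2) ^ 2 by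
    obtain ⟨c, hc, hcz⟩ := this
    have hM := barrierProfile_le_of_one_le (sqDist_pole_mem_Icc hp hN hc hzD).1 hcz
      (by nlinarith)
    have hl := barrierProfile_le_pole hp hN (Or.inl rfl) hzD
    have hu := barrierProfile_le_pole hp hN (Or.inr rfl) hzD
    rw [barrier, le_div_iff₀ hgap, one_mul, barrierGap]
    rcases hc with rfl | rfl <;> unfold pole at * <;> linarith
  obtain ⟨⟨hz2, hk1, hk2⟩, hlow | hhigh⟩ := hz
  · refine ⟨lowerPole N, Or.inl rfl, ?_⟩
    have hk : (nhat N : ℝ) ≤ z.1 := by exact_mod_cast hk1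
    have hn : (0 : ℝ) ≤ nhat N := by exact_mod_cast (by omega : (0 : ℤ) ≤ nhat N)
    simp only [sqDist, lowerPole, hz2]
    push_cast
    nlinarith
  · refine ⟨upperPole N, Or.inr rfl, ?_⟩
    have hk : (z.1 : ℝ) ≤ N - 2 := by exact_mod_cast hk2
    simp only [sqDist, upperPole, hz2]
    push_cast
    nlinarith

theorem lap2_barrier_neg (hgap : 0 < barrierGap N Q) (hz : memB p N z) :
    lap2 (barrier N Q) z < 0 := by
  simp only [memB, lt_max_iff] at hz
  have hl : 2 ≤ sqDist (lowerPole N) z := by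
    have : 2 ≤ z.2 - (nhat N - 1) := by omega
    simp only [sqDist, lowerPole]
    nlinarith [sq_nonneg (z.1 - (nhat N - 2))]
  have hu : 2 ≤ sqDist (upperPole N) z := by
    have : 2 ≤ ((N : ℤ) - 1) - z.1 := by omega
    simp only [sqDist, upperPole]
    nlinarith [sq_nonneg (z.2 - N)]
  have hlin : lap2 (barrier N Q) z =
      (lap2 (pole (lowerPole N)) z + lap2 (pole (upperPole N)) z) / barrierGap N Q := by
    simp only [lap2, barrier]
    ring
  rw [hlin]
  exact div_neg_of_neg_of_pos (add_neg (lap2_pole_neg hl) (lap2_pole_neg hu)) hgap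

theorem ref2_barrier_neg (hgap : 0 < barrierGap N Q) (hz : memD N z) :
    ref2 (barrier N Q) z < 0 := by
  obtain ⟨hz2, hk1, hk2⟩ := hz
  have hl : 2 ≤ sqDist (lowerPole N) z := by
    have : 2 ≤ z.2 - (nhat N - 1) := by omega
    simp only [sqDist, lowerPole]
    nlinarith [sq_nonneg (z.1 - (nhat N - 2))]
  have hu : 2 ≤ sqDist (upperPole N) z := by
    have h₁ : 1 ≤ ((N : ℤ) - 1) - z.1 := by omega
    have h₂ : 1 ≤ (N : ℤ) - z.2 := by omega
    simp only [sqDist, upperPole]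
    nlinarith
  have hlin : ref2 (barrier N Q) z =
      (ref2 (pole (lowerPole N)) z + ref2 (pole (upperPole N)) z) / barrierGap N Q := by
    simp only [ref2, barrier]
    ring
  rw [hlin, ref2_pole_eq_half_lap2 (by simp only [lowerPole]; omega),
    ref2_pole_eq_half_lap2 (by simp only [upperPole]; omega)]
  exact div_neg_of_neg_of_pos (by linarith [lap2_pole_neg hl, lap2_pole_neg hu]) hgap

theorem barrier_le_of_far {δ : ℝ} (hp : (p : ℤ) + 3 ≤ nhat N) (hN : nhat N ≤ N - 2)
    (hgap : 0 < barrierGap N Q) (hδN : 2 ≤ δ * N) (hnδ : (nhat N : ℝ) ≤ δ * N / 2)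
    {x : ℤ × ℤ} (hx : memB p N x) (hx₁ : δ * N < max |(x.1 : ℝ)| |(x.2 : ℝ)|)
    (hx₂ : δ * N < max |(N : ℝ) - x.1| |(N : ℝ) - x.2|) :
    barrier N Q x ≤ Real.log (8 / δ ^ 2) / barrierGap N Q := by
  have hxD : x ∈ walkDomain p N := Or.inl hx
  have hr : 0 ≤ δ * N / 2 := by linarith
  have hpole : ∀ c, (c = lowerPole N ∨ c = upperPole N) → (δ * N / 2) ^ 2 ≤ sqDist c x →
      pole c x - barrierProfile (2 * (N : ℝ) ^ 2) ≤ Real.log (8 / δ ^ 2) / 2 := by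
    intro c hc hcx
    have hpos : 0 < (δ * N / 2) ^ 2 := by positivity
    have hδ : δ ≠ 0 := by rintro rfl; linarith
    have hN0 : (0 : ℝ) < N := by exact_mod_cast (by omega : 0 < N)
    calc pole c x - barrierProfile (2 * (N : ℝ) ^ 2)
        ≤ Real.log (2 * (N : ℝ) ^ 2 / sqDist c x) / 2 :=
          barrierProfile_sub_le (by linarith) (sqDist_pole_mem_Icc hp hN hc hxD).2
      _ ≤ Real.log (2 * (N : ℝ) ^ 2 / (δ * N / 2) ^ 2) / 2 := by
          gcongr
          exact div_pos (by positivity) (by linarith)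
      _ = Real.log (8 / δ ^ 2) / 2 := by
          congr 2
          field_simp
          ring
  simp only [memB, lt_max_iff] at hx
  have h₁ : (0 : ℝ) < x.1 := by exact_mod_cast (by omega : 0 < x.1)
  have h₂ : (0 : ℝ) < x.2 := by exact_mod_cast (by omega : 0 < x.2)
  have h₃ : (0 : ℝ) < N - x.1 := sub_pos.2 (by exact_mod_cast (by omega : x.1 < N))
  have h₄ : (0 : ℝ) < N - x.2 := sub_pos.2 (by exact_mod_cast (by omega : x.2 < N))
  rw [abs_of_pos h₁, abs_of_pos h₂] at hx₁
  rw [abs_of_pos h₃, abs_of_pos h₄] at hx₂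
  have hl := hpole _ (Or.inl rfl) <| sq_le_sqDist hr <| by
    simp only [lowerPole]
    rcases lt_max_iff.1 hx₁ with h | h
    · exact Or.inl (le_abs.2 (Or.inl (by push_cast; linarith)))
    · exact Or.inr (le_abs.2 (Or.inl (by push_cast; linarith)))
  have hu := hpole _ (Or.inr rfl) <| sq_le_sqDist hr <| by
    simp only [upperPole]
    rcases lt_max_iff.1 hx₂ with h | h
    · exact Or.inl (le_abs.2 (Or.inr (by push_cast; linarith)))
    · exact Or.inr (le_abs.2 (Or.inr (by push_cast; linarith)))
  rw [barrier, div_le_div_iff_of_pos_right hgap]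
  linarith

end barrier

theorem barrierGap_rpow_ge {s : ℝ} (hs : 0 ≤ s) {N : ℕ} (hN : 1 ≤ N) :
    (1 - s) * Real.log N - 3 ≤ barrierGap N ((N : ℝ) ^ s) := by
  have hN1 : (1 : ℝ) ≤ N := by exact_mod_cast hN
  have hQ : 1 ≤ (N : ℝ) ^ s := Real.one_le_rpow hN1 hs
  have hlogQ : Real.log ((N : ℝ) ^ s + 2) ≤ Real.log 3 + s * Real.log N := by
    rw [← Real.log_rpow (by linarith), ← Real.log_mul (by norm_num) (by positivity)]
    exact Real.log_le_log (by positivity) (by linarith)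
  have hlog3 : Real.log 3 ≤ 2 := by
    have := Real.log_le_sub_one_of_pos (x := 3) (by norm_num)
    linarith
  have hinv : 1 / (2 * ((N : ℝ) ^ s + 2) ^ 2) ≤ 1 := by
    rw [div_le_one (by positivity)]
    nlinarith
  have hinvN : 0 ≤ 1 / (2 * (N : ℝ) ^ 2) := by positivity
  unfold barrierGap barrierProfile
  rw [Real.log_mul (by norm_num) (by positivity), Real.log_mul (by norm_num) (by positivity),
    Real.log_pow, Real.log_pow]
  push_cast
  linarith

theorem tendsto_barrierGap_rpow {s : ℝ} (hs₀ : 0 ≤ s) (hs₁ : s < 1) :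
    Tendsto (fun N : ℕ => barrierGap N ((N : ℝ) ^ s)) atTop atTop := by
  have hlog : Tendsto (fun N : ℕ => (1 - s) * Real.log N + -3) atTop atTop :=
    tendsto_atTop_add_const_right _ _
      ((Real.tendsto_log_atTop.comp tendsto_natCast_atTop_atTop).const_mul_atTop (by linarith))
  refine tendsto_atTop_mono' _ ((eventually_ge_atTop 1).mono fun N hN => ?_) hlog
  simpa only [sub_eq_add_neg] using barrierGap_rpow_ge hs₀ hN

theorem tendsto_nhat_atTop : Tendsto nhat atTop atTop :=
  tendsto_floor_atTop.comp ((tendsto_rpow_atTop (by norm_num)).comp tendsto_natCast_atTop_atTop)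

theorem eventually_nhat_le_mul {c : ℝ} (hc : 0 < c) :
    ∀ᶠ N : ℕ in atTop, (nhat N : ℝ) ≤ c * N := by
  filter_upwards [((tendsto_rpow_atTop (by norm_num : (0 : ℝ) < 1 / 4)).comp
    tendsto_natCast_atTop_atTop).eventually_ge_atTop (1 / c)] with N hN
  have hsplit : (N : ℝ) = (N : ℝ) ^ (3 / 4 : ℝ) * (N : ℝ) ^ (1 / 4 : ℝ) := by
    rw [← Real.rpow_add' (Nat.cast_nonneg _) (by norm_num)]
    norm_num
  calc (nhat N : ℝ) ≤ (N : ℝ) ^ (3 / 4 : ℝ) := Int.floor_le _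
    _ = c * ((N : ℝ) ^ (3 / 4 : ℝ) * (1 / c)) := by field_simp
    _ ≤ c * ((N : ℝ) ^ (3 / 4 : ℝ) * (N : ℝ) ^ (1 / 4 : ℝ)) := by
        gcongr
        exact hN
    _ = c * N := by rw [← hsplit]

theorem reflected_walk_avoids_diagonal_extremities_general
    (p : ℕ) (ε : ℝ) (hε : 0 < ε)
    (H : ℕ → (ℤ × ℤ) → ℝ)
    (hH : ∀ N : ℕ, p + 2 < N →
      (∀ x : ℤ × ℤ, H N x ∈ Set.Icc (0 : ℝ) 1) ∧
      (∀ x : ℤ × ℤ, memDtil N ε x → H N x = 1) ∧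
      (∀ x : ℤ × ℤ, memBd p N x → H N x = 0) ∧
      (∀ x : ℤ × ℤ, memB p N x → lap2 (H N) x = 0) ∧
      (∀ x : ℤ × ℤ, memD N x → ¬ memDtil N ε x → ref2 (H N) x = 0)) :
    ∀ δ > (0 : ℝ), ∀ ε' > (0 : ℝ), ∃ N₀ : ℕ, ∀ N ≥ N₀, ∀ x : ℤ × ℤ,
      memB p N x →
      δ * N < max |(x.1 : ℝ)| |(x.2 : ℝ)| →
      δ * N < max |(N : ℝ) - (x.1 : ℝ)| |(N : ℝ) - (x.2 : ℝ)| →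
        H N x ≤ ε' := by
  intro δ hδ ε' hε'
  set s := max (1 - ε / 4) (1 / 2)
  have hs₀ : 0 ≤ s := le_max_of_le_right (by norm_num)
  have hs₁ : s < 1 := max_lt (by linarith) (by norm_num)
  refine eventually_atTop.1 ?_
  filter_upwards [tendsto_nhat_atTop.eventually_ge_atTop ((p : ℤ) + 3),
    eventually_nhat_le_mul (c := 1 / 2) (by norm_num), eventually_nhat_le_mul (half_pos hδ),
    tendsto_natCast_atTop_atTop.eventually_ge_atTop (2 / δ),
    (tendsto_barrierGap_rpow hs₀ hs₁).eventually_ge_atTop (max 1 (Real.log (8 / δ ^ 2) / ε'))]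
    with N hp hhalf hnδ hNδ hgap
  intro x hx hx₁ hx₂
  have hN : nhat N ≤ N - 2 := by
    have : 2 * nhat N ≤ N := by exact_mod_cast (by push_cast; linarith : ((2 * nhat N : ℤ) : ℝ) ≤ N)
    omega
  have hgap₀ : 0 < barrierGap N (N ^ s) := one_pos.trans_le (le_of_max_le_left hgap)
  obtain ⟨-, hDtil, hBd, hB, hD⟩ := hH N (by omega)
  calc H N x ≤ barrier N (N ^ s) x :=
        le_of_lap2_lt_of_ref2_lt hp hN (A := {z | memDtil N ε z})
          (fun z hz => (hDtil z hz).trans_le <| one_le_barrier hp hN hgap₀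
            (Real.rpow_le_rpow_of_exponent_le (by exact_mod_cast (by omega : 1 ≤ N))
              (le_max_left _ _)) (by positivity) hz)
          (fun z hz => (hBd z hz).trans_le <| barrier_nonneg hp hN hgap₀ (Or.inr (Or.inr hz)))
          (fun z hz => by rw [hB z hz]; exact lap2_barrier_neg hgap₀ hz)
          (fun z hz hzA => by rw [hD z hz hzA]; exact ref2_barrier_neg hgap₀ hz)
          x (Or.inl hx)
    _ ≤ Real.log (8 / δ ^ 2) / barrierGap N (N ^ s) :=
        barrier_le_of_far hp hN hgap₀ ((div_le_iff₀' hδ).1 hNδ) (by linarith) hx hx₁ hx₂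
    _ ≤ ε' := by
        rw [div_le_iff₀ hgap₀]
        have := (div_le_iff₀ hε').1 (le_of_max_le_right hgap)
        linarith

/-- the planar random walk reflected at the diagonal, started away from
the corners, does not reach the extremities of the diagonal before the boundary.
Here `H N 𝐤` is the probability that the reflected walk started from `𝐤` hits
`D̃_{N,ε}` before `∂B_N`, characterised as the discrete-harmonic solution of the
stated boundary value problem. -/
theorem reflected_walk_avoids_diagonal_extremities
    (p : ℕ) (hp : 1 ≤ p) (ε : ℝ) (hε : 0 < ε)
    (H : ℕ → (ℤ × ℤ) → ℝ)
    (hH : ∀ N : ℕ, p + 2 < N →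
      (∀ x : ℤ × ℤ, H N x ∈ Set.Icc (0 : ℝ) 1) ∧
      (∀ x : ℤ × ℤ, memDtil N ε x → H N x = 1) ∧
      (∀ x : ℤ × ℤ, memBd p N x → H N x = 0) ∧
      (∀ x : ℤ × ℤ, memB p N x → lap2 (H N) x = 0) ∧
      (∀ x : ℤ × ℤ, memD N x → ¬ memDtil N ε x → ref2 (H N) x = 0)) :
    ∀ δ > (0 : ℝ), ∀ ε' > (0 : ℝ), ∃ N₀ : ℕ, ∀ N ≥ N₀, ∀ x : ℤ × ℤ,
      memB p N x →
      δ * N < max |(x.1 : ℝ)| |(x.2 : ℝ)| →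
      δ * N < max |(N : ℝ) - (x.1 : ℝ)| |(N : ℝ) - (x.2 : ℝ)| →
        H N x ≤ ε' :=
  reflected_walk_avoids_diagonal_extremities_general p ε hε H hH

end BoundaryDriven
end

section
/- Occupation-time bound for the diagonal: for every c > 0, lim_{N→∞} sup_{𝐤 ∈ B_N} N^{1−c} u_N(𝐤) = 0. -/
open Set

namespace BoundaryDriven

open scoped Classical

/-!
`u_N` is superharmonic and vanishes on the boundary of the box, so `u_N ≥ 0` by the maximum
principle. The barrier `(4N + 1 − |l − k − 1|) / (2N²)` has Laplacian `−2/N²` on the whole line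
`D̄` and `0` off it, so it is a supersolution of the same Dirichlet problem, and the comparison
principle gives `u_N ≤ 3/N` on the box. Hence `N^{1−c} u_N = O(N^{−c})`.
-/

theorem lap2_sub (u w : ℤ × ℤ → ℝ) (x : ℤ × ℤ) : lap2 (u - w) x = lap2 u x - lap2 w x := by
  simp only [lap2, Pi.sub_apply]
  ring

theorem exists_max_on_boundary {n : ℤ} (hn : 0 ≤ n) {v : ℤ × ℤ → ℝ}
    (hv : ∀ x : ℤ × ℤ, max |x.1| |x.2| < n → 0 ≤ lap2 v x) :
    ∃ z : ℤ × ℤ, max |z.1| |z.2| = n ∧ ∀ x : ℤ × ℤ, max |x.1| |x.2| ≤ n → v x ≤ v z := by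
  set box := Finset.Icc (-n) n ×ˢ Finset.Icc (-n) n
  have mem_box (x : ℤ × ℤ) : x ∈ box ↔ max |x.1| |x.2| ≤ n := by
    simp only [box, Finset.mem_product, Finset.mem_Icc, max_le_iff, abs_le]
  -- Among the maximisers of `v`, the rightmost one cannot be interior.
  obtain ⟨z, hz, hmax⟩ := box.exists_max_image (fun x => toLex (v x, x.1))
    ⟨(0, 0), (mem_box _).2 (by simpa using hn)⟩
  have le_z (x : ℤ × ℤ) (hx : max |x.1| |x.2| ≤ n) : v x < v z ∨ v x = v z ∧ x.1 ≤ z.1 :=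
    Prod.Lex.toLex_le_toLex.1 (hmax x ((mem_box x).2 hx))
  refine ⟨z, ?_, fun x hx => (le_z x hx).elim le_of_lt fun h => h.1.le⟩
  by_contra hbd
  have hint : max |z.1| |z.2| < n := lt_of_le_of_ne ((mem_box z).1 hz) hbd
  simp only [max_lt_iff, abs_lt] at hint
  have hnbr (y : ℤ × ℤ) (hy : max |y.1| |y.2| ≤ n) : v y ≤ v z :=
    (le_z y hy).elim le_of_lt fun h => h.1.le
  have h₁ := hnbr (z.1 + 1, z.2) (by simp only [max_le_iff, abs_le]; omega)
  have h₂ := hnbr (z.1 - 1, z.2) (by simp only [max_le_iff, abs_le]; omega)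
  have h₃ := hnbr (z.1, z.2 + 1) (by simp only [max_le_iff, abs_le]; omega)
  have h₄ := hnbr (z.1, z.2 - 1) (by simp only [max_le_iff, abs_le]; omega)
  have hlap := hv z (by simp only [max_lt_iff, abs_lt]; omega)
  have heq : v (z.1 + 1, z.2) = v z := by unfold lap2 at hlap; linarith
  rcases le_z (z.1 + 1, z.2) (by simp only [max_le_iff, abs_le]; omega) with h | h
  · exact h.ne heq
  · exact absurd h.2 (by omega)

theorem comparison_principle {n : ℤ} {u w : ℤ × ℤ → ℝ}
    (hlap : ∀ x : ℤ × ℤ, max |x.1| |x.2| < n → lap2 w x ≤ lap2 u x)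
    (hbd : ∀ x : ℤ × ℤ, max |x.1| |x.2| = n → u x ≤ w x)
    {x : ℤ × ℤ} (hx : max |x.1| |x.2| ≤ n) : u x ≤ w x := by
  have hn : 0 ≤ n := (abs_nonneg x.1).trans ((le_max_left _ _).trans hx)
  obtain ⟨z, hz, hmax⟩ := exists_max_on_boundary hn (v := u - w) fun y hy => by
    rw [lap2_sub]; linarith [hlap y hy]
  have := hmax x hx
  have := hbd z hz
  simp only [Pi.sub_apply] at *
  linarith

theorem abs_sub_one_add_abs_add_one {d : ℤ} (hd : d ≠ 0) : |d - 1| + |d + 1| = 2 * |d| := by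
  rcases hd.lt_or_gt with h | h
  · rw [abs_of_neg h, abs_of_neg (by omega : d - 1 < 0), abs_of_nonpos (by omega : d + 1 ≤ 0)]
    ring
  · rw [abs_of_pos h, abs_of_nonneg (by omega : 0 ≤ d - 1), abs_of_pos (by omega : 0 < d + 1)]
    ring

def distDiag (x : ℤ × ℤ) : ℝ := (|x.2 - x.1 - 1| : ℤ)

theorem lap2_distDiag (x : ℤ × ℤ) : lap2 distDiag x = if x.2 = x.1 + 1 then 4 else 0 := by
  simp only [lap2, distDiag]
  split_ifs with h
  · rw [show x.2 - (x.1 + 1) - 1 = -1 by omega, show x.2 - (x.1 - 1) - 1 = 1 by omega,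
      show x.2 + 1 - x.1 - 1 = 1 by omega, show x.2 - 1 - x.1 - 1 = -1 by omega,
      show x.2 - x.1 - 1 = 0 by omega]
    norm_num
  · have key : ((|x.2 - x.1 - 1 - 1| : ℤ) : ℝ) + (|x.2 - x.1 - 1 + 1| : ℤ)
        = 2 * (|x.2 - x.1 - 1| : ℤ) := by
      exact_mod_cast abs_sub_one_add_abs_add_one (d := x.2 - x.1 - 1) (by omega)
    rw [show x.2 - (x.1 + 1) - 1 = x.2 - x.1 - 1 - 1 by ring,
      show x.2 - (x.1 - 1) - 1 = x.2 - x.1 - 1 + 1 by ring,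
      show x.2 + 1 - x.1 - 1 = x.2 - x.1 - 1 + 1 by ring,
      show x.2 - 1 - x.1 - 1 = x.2 - x.1 - 1 - 1 by ring]
    linear_combination 2 * key

theorem lap2_const_sub_div (a b : ℝ) (f : ℤ × ℤ → ℝ) (x : ℤ × ℤ) :
    lap2 (fun y => (a - f y) / b) x = -lap2 f x / b := by
  simp only [lap2]
  ring

def IsDiagonalOccupationTime (N : ℕ) (u : ℤ × ℤ → ℝ) : Prop :=
  (∀ x : ℤ × ℤ, max |x.1| |x.2| = 2 * (N : ℤ) → u x = 0) ∧
  (∀ x : ℤ × ℤ, max |x.1| |x.2| < 2 * (N : ℤ) → x.2 ≠ x.1 + 1 →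
    (N : ℝ) ^ 2 * lap2 u x = (if memD N x then (-1 : ℝ) else 0)) ∧
  (∀ x : ℤ × ℤ, max |x.1| |x.2| < 2 * (N : ℤ) → x.2 = x.1 + 1 →
    ((N : ℝ) ^ 2 / 2) * lap2 u x = (if memD N x then (-1 : ℝ) else 0))

namespace IsDiagonalOccupationTime

variable {N : ℕ} {u : ℤ × ℤ → ℝ}

theorem lap2_eq (hu : IsDiagonalOccupationTime N u) (hN : 0 < N) {x : ℤ × ℤ}
    (hx : max |x.1| |x.2| < 2 * (N : ℤ)) :
    lap2 u x = if memD N x then -2 / (N : ℝ) ^ 2 else 0 := by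
  have hN2 : (N : ℝ) ^ 2 ≠ 0 := by positivity
  by_cases hdiag : x.2 = x.1 + 1
  · have h := hu.2.2 x hx hdiag
    split_ifs at h ⊢
    · field_simp; linarith
    · simpa [hN2] using h
  · have hD : ¬memD N x := fun hD => hdiag hD.1
    simpa [hD, hN2] using hu.2.1 x hx hdiag

theorem nonneg (hu : IsDiagonalOccupationTime N u) (hN : 0 < N) {x : ℤ × ℤ}
    (hx : max |x.1| |x.2| ≤ 2 * (N : ℤ)) : 0 ≤ u x := by
  refine comparison_principle (u := fun _ => 0) (fun y hy => ?_) (fun y hy => (hu.1 y hy).ge) hx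
  rw [hu.lap2_eq hN hy, show lap2 (fun _ => (0 : ℝ)) y = 0 by simp [lap2]]
  split_ifs
  · exact div_nonpos_of_nonpos_of_nonneg (by norm_num) (by positivity)
  · exact le_rfl

theorem le_barrier (hu : IsDiagonalOccupationTime N u) (hN : 0 < N) {x : ℤ × ℤ}
    (hx : max |x.1| |x.2| ≤ 2 * (N : ℤ)) :
    u x ≤ (4 * N + 1 - distDiag x) / (2 * (N : ℝ) ^ 2) := by
  refine comparison_principle (w := fun y => (4 * N + 1 - distDiag y) / (2 * (N : ℝ) ^ 2))
    (fun y hy => ?_) (fun y hy => ?_) hx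
  · rw [lap2_const_sub_div, lap2_distDiag, hu.lap2_eq hN hy]
    by_cases hD : memD N y
    · rw [if_pos hD.1, if_pos hD]
      field_simp
      norm_num
    · rw [if_neg hD]
      split_ifs
      · exact div_nonpos_of_nonpos_of_nonneg (by norm_num) (by positivity)
      · simp
  · have hy' := hy.le
    simp only [max_le_iff, abs_le] at hy'
    have hdist : distDiag y ≤ 4 * N + 1 := by
      have : |y.2 - y.1 - 1| ≤ 4 * (N : ℤ) + 1 := abs_le.2 ⟨by omega, by omega⟩
      simp only [distDiag]
      exact_mod_cast this
    rw [hu.1 y hy]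
    exact div_nonneg (by linarith) (by positivity)

theorem abs_le_three_div (hu : IsDiagonalOccupationTime N u) (hN : 0 < N) {x : ℤ × ℤ}
    (hx : max |x.1| |x.2| ≤ 2 * (N : ℤ)) : |u x| ≤ 3 / N := by
  have hN1 : (1 : ℝ) ≤ N := by exact_mod_cast hN
  have hdist : 0 ≤ distDiag x := by unfold distDiag; positivity
  rw [abs_of_nonneg (hu.nonneg hN hx)]
  calc u x ≤ (4 * N + 1 - distDiag x) / (2 * (N : ℝ) ^ 2) := hu.le_barrier hN hx
    _ ≤ (4 * N + 1) / (2 * (N : ℝ) ^ 2) := by gcongr; linarith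
    _ ≤ 3 / N := by
      rw [div_le_div_iff₀ (by positivity) (by positivity)]
      nlinarith

end IsDiagonalOccupationTime

theorem nhat_nonneg (N : ℕ) : 0 ≤ nhat N := Int.floor_nonneg.2 (by positivity)

theorem nhat_le_self (N : ℕ) : nhat N ≤ N := by
  rcases N.eq_zero_or_pos with rfl | hN
  · simp [nhat]
  · have hN1 : (1 : ℝ) ≤ N := by exact_mod_cast hN
    exact (Int.floor_le_floor (Real.rpow_le_self_of_one_le hN1 (by norm_num))).trans_eq
      (Int.floor_natCast N)

theorem memB.max_abs_lt {p N : ℕ} {x : ℤ × ℤ} (hx : memB p N x) : max |x.1| |x.2| < N := by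
  obtain ⟨h₁, h₂, h₃, h₄⟩ := hx
  have := nhat_nonneg N
  have := nhat_le_self N
  simp only [max_lt_iff, abs_lt]
  omega

theorem diagonal_occupation_time_bound_general
    (p : ℕ) (c : ℝ) (hc : 0 < c)
    (U : ℕ → (ℤ × ℤ) → ℝ)
    (hU : ∀ N : ℕ, p + 2 < N →
      (∀ x : ℤ × ℤ, max |x.1| |x.2| = 2 * (N : ℤ) → U N x = 0) ∧
      (∀ x : ℤ × ℤ, max |x.1| |x.2| < 2 * (N : ℤ) → x.2 ≠ x.1 + 1 →
        (N : ℝ) ^ 2 * lap2 (U N) x = (if memD N x then (-1 : ℝ) else 0)) ∧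
      (∀ x : ℤ × ℤ, max |x.1| |x.2| < 2 * (N : ℤ) → x.2 = x.1 + 1 →
        ((N : ℝ) ^ 2 / 2) * lap2 (U N) x = (if memD N x then (-1 : ℝ) else 0))) :
    ∀ ε > (0 : ℝ), ∃ N₀ : ℕ, ∀ N ≥ N₀, ∀ x : ℤ × ℤ, memB p N x →
      |(N : ℝ) ^ ((1 : ℝ) - c) * U N x| ≤ ε := by
  intro ε hε
  have hdecay : ∀ᶠ N : ℕ in Filter.atTop, 3 * (N : ℝ) ^ (-c) ≤ ε := by
    have h := ((tendsto_rpow_neg_atTop hc).comp tendsto_natCast_atTop_atTop).const_mul 3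
    rw [mul_zero] at h
    exact h.eventually (ge_mem_nhds hε)
  obtain ⟨N₀, hN₀⟩ := Filter.eventually_atTop.1 (hdecay.and (Filter.eventually_gt_atTop (p + 2)))
  refine ⟨N₀, fun N hN x hx => ?_⟩
  obtain ⟨hdecayN, hpN⟩ := hN₀ N hN
  have hN : 0 < N := by omega
  have hNpos : (0 : ℝ) < N := by exact_mod_cast hN
  have hbox : max |x.1| |x.2| ≤ 2 * (N : ℤ) := by have := hx.max_abs_lt; omega
  have hU3 := IsDiagonalOccupationTime.abs_le_three_div (hU N hpN) hN hbox
  calc |(N : ℝ) ^ ((1 : ℝ) - c) * U N x| = (N : ℝ) ^ ((1 : ℝ) - c) * |U N x| := by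
        rw [abs_mul, abs_of_nonneg (by positivity)]
    _ ≤ (N : ℝ) ^ ((1 : ℝ) - c) * (3 / N) := by gcongr
    _ = 3 * (N : ℝ) ^ (-c) := by
        rw [Real.rpow_sub hNpos, Real.rpow_one, Real.rpow_neg hNpos.le]
        field_simp
    _ ≤ ε := hdecayN

/-- occupation-time bound for the diagonal.  Here `U N 𝐤` is the
expected time spent in `D_N`, before exiting the box `{‖·‖ < 2N}`, by the rate-`N²`
planar random walk which is reflected across the diagonal `D̄ = {(k,k+1) : k ∈ ℤ}` with
probability 1/2 (i.e. jumps at half rate on `D̄`); it is characterised as the solution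
of the stated discrete Dirichlet problem. -/
theorem diagonal_occupation_time_bound
    (p : ℕ) (hp : 1 ≤ p) (c : ℝ) (hc : 0 < c)
    (U : ℕ → (ℤ × ℤ) → ℝ)
    (hU : ∀ N : ℕ, p + 2 < N →
      (∀ x : ℤ × ℤ, max |x.1| |x.2| = 2 * (N : ℤ) → U N x = 0) ∧
      (∀ x : ℤ × ℤ, max |x.1| |x.2| < 2 * (N : ℤ) → x.2 ≠ x.1 + 1 →
        (N : ℝ) ^ 2 * lap2 (U N) x = (if memD N x then (-1 : ℝ) else 0)) ∧
      (∀ x : ℤ × ℤ, max |x.1| |x.2| < 2 * (N : ℤ) → x.2 = x.1 + 1 →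
        ((N : ℝ) ^ 2 / 2) * lap2 (U N) x = (if memD N x then (-1 : ℝ) else 0))) :
    ∀ ε > (0 : ℝ), ∃ N₀ : ℕ, ∀ N ≥ N₀, ∀ x : ℤ × ℤ, memB p N x →
      |(N : ℝ) ^ ((1 : ℝ) - c) * U N x| ≤ ε :=
  diagonal_occupation_time_bound_general p c hc U hU

end BoundaryDriven
end

section
/- At small times the heat-equation solution in the interior stays close to the initial profile: there exists a function δ : (0,1) → [0,∞) with δ(ε) → 0 as ε → 0 such that for every ε ∈ (0, min(1,T)) and every u ∈ [ε^{1/4}, 1−ε^{1/4}]: | ρ̄(ε,u) − ρ_0(u) | ≤ δ(ε). -/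
set_option maxHeartbeats 1000000

open Filter Set

namespace BoundaryDriven

open Topology

private lemma deriv2_aux {f : ℝ → ℝ} {u : ℝ} (hf : ContDiffAt ℝ 2 f u) :
    (∀ᶠ v in 𝓝 u, DifferentiableAt ℝ f v) ∧
      HasDerivAt (deriv f) (deriv (deriv f) u) u := by
  obtain ⟨s, hs, hfs⟩ := hf.contDiffOn le_rfl (by simp)
  obtain ⟨t, hts, ht, hut⟩ := mem_nhds_iff.1 hs
  have hft : ContDiffOn ℝ (1 + 1) f t := by
    exact_mod_cast hfs.mono hts
  rw [contDiffOn_succ_iff_deriv_of_isOpen ht] at hft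
  have htu : t ∈ 𝓝 u := ht.mem_nhds hut
  constructor
  · filter_upwards [htu] with v hv using (hft.1 v hv).differentiableAt (ht.mem_nhds hv)
  · have : DifferentiableAt ℝ (deriv f) u :=
      (hft.2.2.differentiableOn one_ne_zero u hut).differentiableAt htu
    exact this.hasDerivAt

private lemma secondDerivTest {f : ℝ → ℝ} {u c : ℝ} (hmax : IsLocalMax f u)
    (hev : ∀ᶠ v in 𝓝 u, DifferentiableAt ℝ f v)
    (hd2 : HasDerivAt (deriv f) c u) : c ≤ 0 := by
  by_contra hc
  push_neg at hc
  have h0 : deriv f u = 0 := hmax.deriv_eq_zero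
  have hslope : Tendsto (slope (deriv f) u) (𝓝[≠] u) (𝓝 c) :=
    hasDerivAt_iff_tendsto_slope.1 hd2
  have hpos : ∀ᶠ v in 𝓝[≠] u, 0 < slope (deriv f) u v :=
    hslope.eventually (eventually_gt_nhds hc)
  rw [eventually_nhdsWithin_iff] at hpos
  have hall : ∀ᶠ v in 𝓝 u, (v ∈ ({u}ᶜ : Set ℝ) → 0 < slope (deriv f) u v)
      ∧ DifferentiableAt ℝ f v ∧ f v ≤ f u := hpos.and (hev.and hmax)
  obtain ⟨r, hr, H⟩ := Metric.eventually_nhds_iff.1 hall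
  have hderivpos : ∀ v, u < v → v < u + r → 0 < deriv f v := by
    intro v h1 h2
    have hd : dist v u < r := by
      rw [Real.dist_eq, abs_of_pos (by linarith)]; linarith
    have hslope_pos := (H hd).1 (by simp [ne_of_gt h1])
    have : slope (deriv f) u v = deriv f v / (v - u) := by
      rw [slope_def_field, h0, sub_zero]
    rw [this] at hslope_pos
    have := mul_pos hslope_pos (show (0:ℝ) < v - u by linarith)
    rwa [div_mul_cancel₀] at this
    linarith
  have hmono : StrictMonoOn f (Icc u (u + r/2)) := by
    apply strictMonoOn_of_deriv_pos (convex_Icc _ _)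
    · intro x hx
      have : dist x u < r := by
        rw [Real.dist_eq, abs_of_nonneg (by linarith [hx.1])]
        linarith [hx.2]
      exact ((H this).2.1.continuousAt.continuousWithinAt)
    · intro x hx
      rw [interior_Icc] at hx
      exact hderivpos x hx.1 (by linarith [hx.2])
  have h1 : f u < f (u + r/2) :=
    hmono (left_mem_Icc.2 (by linarith)) (right_mem_Icc.2 (by linarith)) (by linarith)
  have h2 : f (u + r/2) ≤ f u := by
    have : dist (u + r/2) u < r := by
      rw [Real.dist_eq, abs_of_nonneg (by linarith)]; linarith
    exact (H this).2.2
  linarith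

private lemma deriv_nonneg_of_isMaxOn {g : ℝ → ℝ} {σ e t d : ℝ}
    (hσ : σ < t) (hte : t ≤ e) (hmax : ∀ s ∈ Icc σ e, g s ≤ g t)
    (hd : HasDerivAt g d t) : 0 ≤ d := by
  have hslope := hasDerivAt_iff_tendsto_slope.1 hd
  have h2 : Tendsto (slope g t) (𝓝[<] t) (𝓝 d) :=
    hslope.mono_left (nhdsWithin_mono _ fun x hx => ne_of_lt hx)
  refine ge_of_tendsto h2 ?_
  filter_upwards [Ioo_mem_nhdsLT hσ] with s hs
  have hgs : g s ≤ g t := hmax s ⟨hs.1.le, hs.2.le.trans hte⟩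
  rw [slope_def_field]
  have h1 : g s - g t ≤ 0 := by linarith
  have h2 : s - t < 0 := by linarith [hs.2]
  exact div_nonneg_of_nonpos h1 h2.le

private lemma maxPrinciple {σ e : ℝ} (hσe : σ < e) (F : ℝ → ℝ → ℝ)
    (hc : ContinuousOn (fun q : ℝ × ℝ => F q.1 q.2) (Icc σ e ×ˢ Icc 0 1))
    (hb0 : ∀ u ∈ Icc (0:ℝ) 1, F σ u ≤ 0)
    (hbl : ∀ t ∈ Icc σ e, F t 0 ≤ 0)
    (hbr : ∀ t ∈ Icc σ e, F t 1 ≤ 0)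
    (hint : ∀ t ∈ Ioc σ e, ∀ u ∈ Ioo (0:ℝ) 1, ∃ d d2 : ℝ,
      HasDerivAt (fun s => F s u) d t ∧
      (∀ᶠ v in 𝓝 u, DifferentiableAt ℝ (F t) v) ∧
      HasDerivAt (deriv (F t)) d2 u ∧ d < d2) :
    ∀ t ∈ Icc σ e, ∀ u ∈ Icc (0:ℝ) 1, F t u ≤ 0 := by
  have hQ : IsCompact (Icc σ e ×ˢ Icc (0:ℝ) 1) := isCompact_Icc.prod isCompact_Icc
  have hne : (Icc σ e ×ˢ Icc (0:ℝ) 1).Nonempty :=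
    ⟨(σ, 0), mem_prod.2 ⟨left_mem_Icc.2 hσe.le, left_mem_Icc.2 zero_le_one⟩⟩
  obtain ⟨⟨t0, u0⟩, hq0, hmax⟩ := hQ.exists_isMaxOn hne hc
  have hmax' : ∀ p ∈ Icc σ e ×ˢ Icc (0:ℝ) 1, F p.1 p.2 ≤ F t0 u0 := fun p hp => hmax hp
  intro t ht u hu
  have key : F t0 u0 ≤ 0 := by
    obtain ⟨⟨ht01, ht02⟩, ⟨hu01, hu02⟩⟩ := mem_prod.1 hq0
    simp only at ht01 ht02 hu01 hu02
    rcases eq_or_lt_of_le ht01 with h1 | h1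
    · rw [← h1]; exact hb0 u0 ⟨hu01, hu02⟩
    rcases eq_or_lt_of_le hu01 with h2 | h2
    · rw [← h2]; exact hbl t0 ⟨ht01, ht02⟩
    rcases eq_or_lt_of_le hu02 with h3 | h3
    · rw [h3]; exact hbr t0 ⟨ht01, ht02⟩
    exfalso
    obtain ⟨d, d2, hd, hev, hd2, hlt⟩ := hint t0 ⟨h1, ht02⟩ u0 ⟨h2, h3⟩
    have hd0 : 0 ≤ d := by
      refine deriv_nonneg_of_isMaxOn h1 ht02 (fun s hs => ?_) hd
      exact hmax' (s, u0) (mem_prod.2 ⟨hs, ⟨hu01, hu02⟩⟩)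
    have hlocmax : IsLocalMax (F t0) u0 := by
      filter_upwards [Icc_mem_nhds h2 h3] with v hv
      exact hmax' (t0, v) (mem_prod.2 ⟨⟨ht01, ht02⟩, hv⟩)
    have := secondDerivTest hlocmax hev hd2
    linarith
  exact le_trans (hmax' (t, u) (mem_prod.2 ⟨ht, hu⟩)) key

private lemma rho0_bound {ρ0 : ℝ → ℝ} (hρ0 : ContDiffOn ℝ 2 ρ0 (Icc 0 1)) :
    ∃ M : ℝ, 0 ≤ M ∧ ∀ u ∈ Ioo (0:ℝ) 1, |deriv (deriv ρ0) u| ≤ M := by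
  have hud : UniqueDiffOn ℝ (Icc (0:ℝ) 1) := uniqueDiffOn_Icc zero_lt_one
  set D1 := derivWithin ρ0 (Icc (0:ℝ) 1) with hD1
  set D2 := derivWithin D1 (Icc (0:ℝ) 1) with hD2
  have h2 : ContDiffOn ℝ (1 + 1) ρ0 (Icc (0:ℝ) 1) := by exact_mod_cast hρ0
  rw [contDiffOn_succ_iff_derivWithin hud] at h2
  have h1 : ContDiffOn ℝ (0 + 1) D1 (Icc (0:ℝ) 1) := by exact_mod_cast h2.2.2
  rw [contDiffOn_succ_iff_derivWithin hud] at h1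
  have hcont : ContinuousOn D2 (Icc (0:ℝ) 1) := h1.2.2.continuousOn
  obtain ⟨M0, hM0⟩ := isCompact_Icc.exists_bound_of_continuousOn hcont
  refine ⟨max M0 0, le_max_right _ _, fun u hu => ?_⟩
  have hnb : Icc (0:ℝ) 1 ∈ 𝓝 u := Icc_mem_nhds hu.1 hu.2
  have heq1 : deriv ρ0 =ᶠ[𝓝 u] D1 := by
    filter_upwards [Ioo_mem_nhds hu.1 hu.2] with v hv
    exact (derivWithin_of_mem_nhds (Icc_mem_nhds hv.1 hv.2)).symm
  have heq : deriv (deriv ρ0) u = D2 u := by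
    rw [heq1.deriv_eq, hD2, derivWithin_of_mem_nhds hnb]
  rw [heq]
  calc |D2 u| ≤ M0 := by simpa [Real.norm_eq_abs] using hM0 u (mem_Icc.2 ⟨hu.1.le, hu.2.le⟩)
    _ ≤ max M0 0 := le_max_left _ _

private lemma tail_tendsto (M : ℝ) :
    Tendsto (fun e : ℝ => M * e +
      2 * Real.exp (1 + e ^ ((1:ℝ)/3) / e ^ ((1:ℝ)/2) - e ^ ((1:ℝ)/4) / e ^ ((1:ℝ)/2)))
      (𝓝[>] (0:ℝ)) (𝓝 0) := by
  have hA : Tendsto (fun e : ℝ => M * e) (𝓝[>] (0:ℝ)) (𝓝 0) := by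
    have hc : Continuous (fun e : ℝ => M * e) := continuous_const.mul continuous_id
    have := hc.tendsto (0:ℝ)
    simpa using this.mono_left nhdsWithin_le_nhds
  have hq : Tendsto (fun e : ℝ => e ^ ((1:ℝ)/4)) (𝓝[>] (0:ℝ)) (𝓝[>] (0:ℝ)) := by
    rw [tendsto_nhdsWithin_iff]
    constructor
    · have hc : ContinuousAt (fun e : ℝ => e ^ ((1:ℝ)/4)) 0 := by
        apply Real.continuousAt_rpow_const 0 ((1:ℝ)/4)
        right; norm_num
      have := hc.tendsto.mono_left (nhdsWithin_le_nhds (s := Ioi (0:ℝ)))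
      simpa [Real.zero_rpow (by norm_num : ((1:ℝ)/4) ≠ 0)] using this
    · filter_upwards [self_mem_nhdsWithin] with e he
      exact Real.rpow_pos_of_pos he _
  have hinv : Tendsto (fun e : ℝ => (e ^ ((1:ℝ)/4))⁻¹) (𝓝[>] (0:ℝ)) atTop :=
    tendsto_inv_nhdsGT_zero.comp hq
  have hhalf : Tendsto (fun e : ℝ => (1:ℝ) + (-(1:ℝ)/2) * (e ^ ((1:ℝ)/4))⁻¹)
      (𝓝[>] (0:ℝ)) atBot := by
    apply tendsto_atBot_add_const_left
    have := hinv.const_mul_atTop (show (0:ℝ) < 1/2 by norm_num)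
    have hneg : Tendsto (fun e : ℝ => -((1/2) * (e ^ ((1:ℝ)/4))⁻¹)) (𝓝[>] (0:ℝ)) atBot :=
      tendsto_neg_atTop_atBot.comp this
    convert hneg using 2 with e
    ring
  have hexp : Tendsto (fun e : ℝ =>
      1 + e ^ ((1:ℝ)/3) / e ^ ((1:ℝ)/2) - e ^ ((1:ℝ)/4) / e ^ ((1:ℝ)/2))
      (𝓝[>] (0:ℝ)) atBot := by
    apply tendsto_atBot_mono' _ _ hhalf
    filter_upwards [Ioo_mem_nhdsGT_of_mem (Set.left_mem_Ico.2 (show (0:ℝ) < (1/2)^(12:ℕ) by norm_num))]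
      with e he
    have he0 : 0 < e := he.1
    have hq0 : (0:ℝ) < e ^ ((1:ℝ)/4) := Real.rpow_pos_of_pos he0 _
    have hs_eq : e ^ ((1:ℝ)/2) = e ^ ((1:ℝ)/4) * e ^ ((1:ℝ)/4) := by
      rw [← Real.rpow_add he0]; norm_num
    have ha_eq : e ^ ((1:ℝ)/3) = e ^ ((1:ℝ)/12) * e ^ ((1:ℝ)/4) := by
      rw [← Real.rpow_add he0]; norm_num
    have h12 : e ^ ((1:ℝ)/12) ≤ 1/2 := by
      have := Real.rpow_le_rpow he0.le he.2.le (show (0:ℝ) ≤ 1/12 by norm_num)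
      calc e ^ ((1:ℝ)/12) ≤ ((1/2:ℝ)^(12:ℕ)) ^ ((1:ℝ)/12) := this
        _ = 1/2 := by
          rw [← Real.rpow_natCast (1/2:ℝ) 12, ← Real.rpow_mul (by norm_num : (0:ℝ) ≤ 1/2)]
          norm_num
    have key : e ^ ((1:ℝ)/3) / e ^ ((1:ℝ)/2) - e ^ ((1:ℝ)/4) / e ^ ((1:ℝ)/2)
        = (e ^ ((1:ℝ)/12) - 1) * (e ^ ((1:ℝ)/4))⁻¹ := by
      rw [ha_eq, hs_eq]
      field_simp
    have hmul : (e ^ ((1:ℝ)/12) - 1) * (e ^ ((1:ℝ)/4))⁻¹ ≤ (-(1:ℝ)/2) * (e ^ ((1:ℝ)/4))⁻¹ :=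
      mul_le_mul_of_nonneg_right (by linarith) (inv_nonneg.2 hq0.le)
    linarith [key, hmul]
  have hB : Tendsto (fun e : ℝ =>
      2 * Real.exp (1 + e ^ ((1:ℝ)/3) / e ^ ((1:ℝ)/2) - e ^ ((1:ℝ)/4) / e ^ ((1:ℝ)/2)))
      (𝓝[>] (0:ℝ)) (𝓝 0) := by
    have := (Real.tendsto_exp_atBot.comp hexp).const_mul (2:ℝ)
    simpa using this
  simpa using hA.add hB

private lemma barrier_bound
    (T α β : ℝ) (hα : α ∈ Icc (0:ℝ) 1) (hβ : β ∈ Icc (0:ℝ) 1)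
    (ρ0 : ℝ → ℝ) (hρ0 : ContDiffOn ℝ 2 ρ0 (Icc 0 1))
    (hρ0r : ∀ u ∈ Icc (0:ℝ) 1, ρ0 u ∈ Icc (0:ℝ) 1)
    (rb : ℝ → ℝ → ℝ)
    (hrbRange : ∀ t ∈ Icc 0 T, ∀ u ∈ Icc (0:ℝ) 1, rb t u ∈ Icc (0:ℝ) 1)
    (hrbCont : ContinuousOn (fun q : ℝ × ℝ => rb q.1 q.2) (Ioc 0 T ×ˢ Icc 0 1))
    (hrbSmooth : ContDiffOn ℝ (⊤ : ℕ∞) (fun q : ℝ × ℝ => rb q.1 q.2) (Ioc 0 T ×ˢ Ioo 0 1))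
    (hrbPDE : ∀ t ∈ Ioc 0 T, ∀ u ∈ Ioo (0:ℝ) 1,
      HasDerivAt (fun s => rb s u) (deriv (deriv (fun v => rb t v)) u) t)
    (hrbLeft : ∀ t ∈ Ioc 0 T, rb t 0 = α)
    (hrbRight : ∀ t ∈ Ioc 0 T, rb t 1 = β)
    (M : ℝ) (hM : 0 ≤ M) (hMb : ∀ u ∈ Ioo (0:ℝ) 1, |deriv (deriv ρ0) u| ≤ M)
    (e σ a s η ε ς : ℝ) (he0 : 0 < e) (heT : e < T) (hσ0 : 0 < σ) (hσe : σ < e)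
    (ha0 : 0 < a) (ha2 : a < 1/2) (hs0 : 0 < s) (hss : s * s = e)
    (hη : 0 < η) (hε : 0 < ε) (hς : ς = 1 ∨ ς = -1)
    (hσU : ∀ x ∈ Icc a (1-a), dist (ρ0 x) (rb σ x) < η/2) :
    ∀ u ∈ Icc (0:ℝ) 1, ς * (rb e u - ρ0 u) ≤ η/2 + M*(e-σ)
      + Real.exp (a/s + (e-σ)/e - u/s) + Real.exp (a/s + (e-σ)/e - (1-u)/s) + ε*(e-σ) := by
  have heT' : e ≤ T := heT.le
  have hςabs : ∀ x : ℝ, ς * x ≤ |x| := by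
    intro x; rcases hς with h | h <;> rw [h]
    · simpa using le_abs_self x
    · simpa using neg_le_abs x
  have hrbR : ∀ t, σ ≤ t → t ≤ e → ∀ v ∈ Icc (0:ℝ) 1, rb t v ∈ Icc (0:ℝ) 1 :=
    fun t h1 h2 v hv => hrbRange t ⟨(hσ0.trans_le h1).le, h2.trans heT'⟩ v hv
  have htT : ∀ t, σ ≤ t → t ≤ e → t ∈ Ioc 0 T :=
    fun t h1 h2 => ⟨hσ0.trans_le h1, h2.trans heT'⟩
  set F : ℝ → ℝ → ℝ := fun t v => ς * (rb t v - ρ0 v)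
      - (η/2 + M*(t-σ) + Real.exp (a/s + (t-σ)/e - v/s)
        + Real.exp (a/s + (t-σ)/e - (1-v)/s)) - ε*(t-σ) with hFdef
  have key : ∀ t ∈ Icc σ e, ∀ u ∈ Icc (0:ℝ) 1, F t u ≤ 0 := by
    apply maxPrinciple hσe F
    · -- continuity
      have hsub2 : Icc σ e ×ˢ Icc (0:ℝ) 1 ⊆ Ioc 0 T ×ˢ Icc 0 1 :=
        prod_mono (fun t ht => htT t ht.1 ht.2) subset_rfl
      have c1 : ContinuousOn (fun q : ℝ × ℝ => rb q.1 q.2) (Icc σ e ×ˢ Icc (0:ℝ) 1) :=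
        hrbCont.mono hsub2
      have c2 : ContinuousOn (fun q : ℝ × ℝ => ρ0 q.2) (Icc σ e ×ˢ Icc (0:ℝ) 1) :=
        hρ0.continuousOn.comp continuous_snd.continuousOn (fun q hq => hq.2)
      have c3 : Continuous (fun q : ℝ × ℝ => η/2 + M*(q.1-σ)
          + Real.exp (a/s + (q.1-σ)/e - q.2/s)
          + Real.exp (a/s + (q.1-σ)/e - (1-q.2)/s)) := by fun_prop
      have c4 : Continuous (fun q : ℝ × ℝ => ε*(q.1-σ)) := by fun_prop
      exact ((continuousOn_const.mul (c1.sub c2)).sub c3.continuousOn).sub c4.continuousOn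
    · -- initial time
      intro v hv
      have hrbv := hrbR σ le_rfl hσe.le v hv
      have hρv := hρ0r v hv
      have habs : |rb σ v - ρ0 v| ≤ 1 := by
        rw [abs_le]; constructor <;> [linarith [hrbv.1, hρv.2]; linarith [hrbv.2, hρv.1]]
      have hςv := hςabs (rb σ v - ρ0 v)
      have hz1 : M * (σ - σ) = 0 := by ring
      have hz2 : ε * (σ - σ) = 0 := by ring
      have hz3 : (σ - σ)/e = 0 := by simp
      have hp1 : 0 < Real.exp (a/s + (σ-σ)/e - v/s) := Real.exp_pos _
      have hp2 : 0 < Real.exp (a/s + (σ-σ)/e - (1-v)/s) := Real.exp_pos _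
      rcases le_or_gt v a with hva | hva
      · have h1 : v/s ≤ a/s := div_le_div_of_nonneg_right hva hs0.le
        have hexp1 : 1 ≤ Real.exp (a/s + (σ-σ)/e - v/s) :=
          Real.one_le_exp (by rw [hz3]; linarith)
        simp only [hFdef]
        linarith [hςv, habs]
      rcases le_or_gt (1-a) v with hva2 | hva2
      · have h1 : (1-v)/s ≤ a/s := div_le_div_of_nonneg_right (show (1-v) ≤ a by linarith) hs0.le
        have hexp2 : 1 ≤ Real.exp (a/s + (σ-σ)/e - (1-v)/s) :=
          Real.one_le_exp (by rw [hz3]; linarith)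
        simp only [hFdef]
        linarith [hςv, habs]
      · have hK := hσU v ⟨hva.le, hva2.le⟩
        rw [Real.dist_eq, abs_sub_comm] at hK
        have hςv2 := hςabs (rb σ v - ρ0 v)
        simp only [hFdef]
        linarith [hςv2, hK]
    · -- left boundary
      intro t ht
      have hL := hrbLeft t (htT t ht.1 ht.2)
      have hρ0m := hρ0r 0 (left_mem_Icc.2 zero_le_one)
      have hςv := hςabs (rb t 0 - ρ0 0)
      have habs : |rb t 0 - ρ0 0| ≤ 1 := by
        rw [hL, abs_le]; constructor <;> [linarith [hα.1, hρ0m.2]; linarith [hα.2, hρ0m.1]]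
      have harg : 0 ≤ a/s + (t-σ)/e - 0/s := by
        have h1 : 0 ≤ a/s := by positivity
        have h2 : 0 ≤ (t-σ)/e := div_nonneg (by linarith [ht.1]) he0.le
        simp; linarith
      have hexp1 : 1 ≤ Real.exp (a/s + (t-σ)/e - 0/s) := Real.one_le_exp harg
      have hp2 : 0 < Real.exp (a/s + (t-σ)/e - (1-0)/s) := Real.exp_pos _
      have hm1 : 0 ≤ M * (t-σ) := mul_nonneg hM (by linarith [ht.1])
      have hm2 : 0 ≤ ε * (t-σ) := mul_nonneg hε.le (by linarith [ht.1])
      simp only [hFdef]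
      linarith [hςv, habs]
    · -- right boundary
      intro t ht
      have hR := hrbRight t (htT t ht.1 ht.2)
      have hρ1m := hρ0r 1 (right_mem_Icc.2 zero_le_one)
      have hςv := hςabs (rb t 1 - ρ0 1)
      have habs : |rb t 1 - ρ0 1| ≤ 1 := by
        rw [hR, abs_le]; constructor <;> [linarith [hβ.1, hρ1m.2]; linarith [hβ.2, hρ1m.1]]
      have harg : 0 ≤ a/s + (t-σ)/e - (1-1)/s := by
        have h1 : 0 ≤ a/s := by positivity
        have h2 : 0 ≤ (t-σ)/e := div_nonneg (by linarith [ht.1]) he0.le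
        simp; linarith
      have hexp2 : 1 ≤ Real.exp (a/s + (t-σ)/e - (1-1)/s) := Real.one_le_exp harg
      have hp1 : 0 < Real.exp (a/s + (t-σ)/e - 1/s) := Real.exp_pos _
      have hm1 : 0 ≤ M * (t-σ) := mul_nonneg hM (by linarith [ht.1])
      have hm2 : 0 ≤ ε * (t-σ) := mul_nonneg hε.le (by linarith [ht.1])
      simp only [hFdef]
      linarith [hςv, habs]
    · -- interior
      intro t ht v hv
      have htT2 : t ∈ Ioc 0 T := htT t ht.1.le ht.2
      have htT3 : t < T := lt_of_le_of_lt ht.2 heT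
      have hopen : IsOpen (Ioo (0:ℝ) T ×ˢ Ioo (0:ℝ) 1) := isOpen_Ioo.prod isOpen_Ioo
      have hmem : ((t, v) : ℝ × ℝ) ∈ Ioo 0 T ×ˢ Ioo (0:ℝ) 1 := ⟨⟨htT2.1, htT3⟩, hv⟩
      have hpair : ContDiffAt ℝ 2 (fun q : ℝ × ℝ => rb q.1 q.2) (t, v) :=
        ((hrbSmooth.mono (prod_mono Ioo_subset_Ioc_self subset_rfl)).of_le (WithTop.coe_le_coe.2 le_top)).contDiffAt
          (hopen.mem_nhds hmem)
      have hslice : ContDiffAt ℝ 2 (fun w => rb t w) v := by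
        have := ContDiffAt.comp v hpair (ContDiffAt.prodMk (contDiffAt_const (c := t)) contDiffAt_id)
        exact this
      obtain ⟨hev1, hD1⟩ := deriv2_aux hslice
      have hρat : ContDiffAt ℝ 2 ρ0 v := hρ0.contDiffAt (Icc_mem_nhds hv.1 hv.2)
      obtain ⟨hev0, hD0⟩ := deriv2_aux hρat
      have hMd : |deriv (deriv ρ0) v| ≤ M := hMb v hv
      set dd1 := deriv (deriv (fun w => rb t w)) v with hdd1
      set dd0 := deriv (deriv ρ0) v with hdd0
      refine ⟨ς*dd1 - (M + Real.exp (a/s + (t-σ)/e - v/s) * (1/e)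
          + Real.exp (a/s + (t-σ)/e - (1-v)/s) * (1/e)) - ε,
        ς*dd1 - ς*dd0 - (Real.exp (a/s + (t-σ)/e - v/s) * (1/e)
          + Real.exp (a/s + (t-σ)/e - (1-v)/s) * (1/e)), ?_, ?_, ?_, ?_⟩
      · -- time derivative
        simp only [hFdef]
        have hrbt : HasDerivAt (fun s' => rb s' v) dd1 t := hrbPDE t htT2 v hv
        have h1 : HasDerivAt (fun s' => ς * (rb s' v - ρ0 v)) (ς * dd1) t :=
          (hrbt.sub_const (ρ0 v)).const_mul ς
        have h2 : HasDerivAt (fun s' => M * (s' - σ)) (M * 1) t :=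
          ((hasDerivAt_id t).sub_const σ).const_mul M
        have h3 : HasDerivAt (fun s' => a/s + (s' - σ)/e - v/s) (1/e) t := by
          have h3a : HasDerivAt (fun s' : ℝ => (s' - σ)/e) (1/e) t := by
            simpa using ((hasDerivAt_id t).sub_const σ).div_const e
          simpa using (h3a.const_add (a/s)).sub_const (v/s)
        have h4 := h3.exp
        have h5 : HasDerivAt (fun s' => a/s + (s' - σ)/e - (1-v)/s) (1/e) t := by
          have h3a : HasDerivAt (fun s' : ℝ => (s' - σ)/e) (1/e) t := by
            simpa using ((hasDerivAt_id t).sub_const σ).div_const e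
          simpa using (h3a.const_add (a/s)).sub_const ((1-v)/s)
        have h6 := h5.exp
        have h7 : HasDerivAt (fun s' => ε * (s' - σ)) (ε * 1) t :=
          ((hasDerivAt_id t).sub_const σ).const_mul ε
        have h8 := (h1.sub ((((hasDerivAt_const t (η/2)).add h2).add h4).add h6)).sub h7
        exact h8.congr_deriv (by ring)
      · -- eventual differentiability in space
        simp only [hFdef]
        filter_upwards [hev1, hev0] with w h1 h0
        have hW : DifferentiableAt ℝ (fun w' => η/2 + M*(t-σ)
            + Real.exp (a/s + (t-σ)/e - w'/s)
            + Real.exp (a/s + (t-σ)/e - (1-w')/s)) w := by fun_prop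
        exact (((h1.sub h0).const_mul ς).sub hW).sub (differentiableAt_const _)
      · -- second space derivative
        set G : ℝ → ℝ := fun w => ς * (deriv (fun w' => rb t w') w - deriv ρ0 w)
            - (Real.exp (a/s + (t-σ)/e - w/s) * (-(1/s))
              + Real.exp (a/s + (t-σ)/e - (1-w)/s) * (-(-1/s))) with hGdef
        have hds : ∀ w : ℝ, HasDerivAt (fun w' => a/s + (t-σ)/e - w'/s) (-(1/s)) w := by
          intro w
          have h0 : HasDerivAt (fun w' : ℝ => w'/s) (1/s) w := (hasDerivAt_id w).div_const s
          exact h0.const_sub (a/s + (t-σ)/e)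
        have hds2 : ∀ w : ℝ, HasDerivAt (fun w' => a/s + (t-σ)/e - (1-w')/s) (-(-1/s)) w := by
          intro w
          have h0 : HasDerivAt (fun w' : ℝ => 1 - w') (-1) w := (hasDerivAt_id w).const_sub 1
          exact (h0.div_const s).const_sub (a/s + (t-σ)/e)
        have hGev : ∀ᶠ w in 𝓝 v, HasDerivAt (F t) (G w) w := by
          filter_upwards [hev1, hev0] with w h1 h0
          have hrbw : HasDerivAt (fun w' => rb t w') (deriv (fun w' => rb t w') w) w :=
            h1.hasDerivAt
          have hρw : HasDerivAt ρ0 (deriv ρ0 w) w := h0.hasDerivAt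
          have hco := ((hrbw.sub hρw).const_mul ς).sub (((hds w).exp).add ((hds2 w).exp))
          have hco2 := hco.sub_const (η/2 + M*(t-σ) + ε*(t-σ))
          have heqF : F t = fun w' => (ς * (rb t w' - ρ0 w')
              - (Real.exp (a/s + (t-σ)/e - w'/s) + Real.exp (a/s + (t-σ)/e - (1-w')/s)))
              - (η/2 + M*(t-σ) + ε*(t-σ)) := by
            funext w'; simp only [hFdef]; ring
          rw [heqF, hGdef]
          exact hco2
        have hEqd : deriv (F t) =ᶠ[𝓝 v] G := hGev.mono fun w hw => hw.deriv
        have hGd : HasDerivAt G (ς*dd1 - ς*dd0 - (Real.exp (a/s + (t-σ)/e - v/s) * (1/e)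
            + Real.exp (a/s + (t-σ)/e - (1-v)/s) * (1/e))) v := by
          have hg1 : HasDerivAt (fun w => ς * (deriv (fun w' => rb t w') w - deriv ρ0 w))
              (ς * (dd1 - dd0)) v := (hD1.sub hD0).const_mul ς
          have hg2 := (((hds v).exp).mul_const (-(1/s))).add (((hds2 v).exp).mul_const (-(-1/s)))
          have hco := hg1.sub hg2
          have hse : (1:ℝ)/e = 1/s * (1/s) := by rw [← hss]; ring
          exact hco.congr_deriv (by rw [hse]; ring)
        exact hGd.congr_of_eventuallyEq hEqd
      · -- strict inequality
        have := abs_le.1 hMd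
        rcases hς with h | h <;> rw [h] <;> linarith [this.1, this.2]
  intro u hu
  have hF := key e (right_mem_Icc.2 hσe.le) u hu
  simp only [hFdef] at hF
  linarith

private lemma claimC
    (T α β : ℝ) (hα : α ∈ Icc (0:ℝ) 1) (hβ : β ∈ Icc (0:ℝ) 1)
    (ρ0 : ℝ → ℝ) (hρ0 : ContDiffOn ℝ 2 ρ0 (Icc 0 1))
    (hρ0r : ∀ u ∈ Icc (0:ℝ) 1, ρ0 u ∈ Icc (0:ℝ) 1)
    (rb : ℝ → ℝ → ℝ)
    (hrbRange : ∀ t ∈ Icc 0 T, ∀ u ∈ Icc (0:ℝ) 1, rb t u ∈ Icc (0:ℝ) 1)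
    (hrbCont : ContinuousOn (fun q : ℝ × ℝ => rb q.1 q.2) (Ioc 0 T ×ˢ Icc 0 1))
    (hrbSmooth : ContDiffOn ℝ (⊤ : ℕ∞) (fun q : ℝ × ℝ => rb q.1 q.2) (Ioc 0 T ×ˢ Ioo 0 1))
    (hrbPDE : ∀ t ∈ Ioc 0 T, ∀ u ∈ Ioo (0:ℝ) 1,
      HasDerivAt (fun s => rb s u) (deriv (deriv (fun v => rb t v)) u) t)
    (hrbLeft : ∀ t ∈ Ioc 0 T, rb t 0 = α)
    (hrbRight : ∀ t ∈ Ioc 0 T, rb t 1 = β)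
    (hrbUnif : ∀ K : Set ℝ, K ⊆ Ioo 0 1 → IsCompact K →
      TendstoUniformlyOn (fun t u => rb t u) ρ0 (𝓝[>] (0:ℝ)) K)
    {η : ℝ} (hη : 0 < η) :
    ∃ e₀ > 0, ∀ e : ℝ, 0 < e → e < min 1 T → e < e₀ →
      ∀ u : ℝ, e ^ ((1:ℝ)/4) ≤ u → u ≤ 1 - e ^ ((1:ℝ)/4) → |rb e u - ρ0 u| ≤ η := by
  obtain ⟨M, hM, hMb⟩ := rho0_bound hρ0
  have hev : ∀ᶠ e in 𝓝[>] (0:ℝ), (M * e +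
      2 * Real.exp (1 + e ^ ((1:ℝ)/3) / e ^ ((1:ℝ)/2) - e ^ ((1:ℝ)/4) / e ^ ((1:ℝ)/2))) < η/2 :=
    (tail_tendsto M).eventually_lt_const (by linarith)
  obtain ⟨e₁, he₁, hsub⟩ := mem_nhdsGT_iff_exists_Ioo_subset.1 hev
  refine ⟨min e₁ (1/8), lt_min (by exact he₁) (by norm_num), ?_⟩
  intro e he0 heT he₀ u huq hu1q
  have heT' : e < T := lt_of_lt_of_le heT (min_le_right _ _)
  have he8 : e < 1/8 := lt_of_lt_of_le he₀ (min_le_right _ _)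
  have hee1 : e < e₁ := lt_of_lt_of_le he₀ (min_le_left _ _)
  -- abbreviations
  have hs0 : (0:ℝ) < e ^ ((1:ℝ)/2) := Real.rpow_pos_of_pos he0 _
  have ha0 : (0:ℝ) < e ^ ((1:ℝ)/3) := Real.rpow_pos_of_pos he0 _
  have hq0 : (0:ℝ) < e ^ ((1:ℝ)/4) := Real.rpow_pos_of_pos he0 _
  have hss : e ^ ((1:ℝ)/2) * e ^ ((1:ℝ)/2) = e := by
    rw [← Real.rpow_add he0]; norm_num
  have ha2 : e ^ ((1:ℝ)/3) < 1/2 := by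
    have h := Real.rpow_lt_rpow he0.le he8 (show (0:ℝ) < 1/3 by norm_num)
    calc e ^ ((1:ℝ)/3) < ((1:ℝ)/8) ^ ((1:ℝ)/3) := h
      _ = 1/2 := by
        rw [show ((1:ℝ)/8) = ((1:ℝ)/2) ^ (3:ℕ) by norm_num,
          ← Real.rpow_natCast ((1:ℝ)/2) 3, ← Real.rpow_mul (by norm_num : (0:ℝ) ≤ 1/2)]
        norm_num
  -- choose σ via uniform convergence
  have hKsub : Icc (e ^ ((1:ℝ)/3)) (1 - e ^ ((1:ℝ)/3)) ⊆ Ioo (0:ℝ) 1 := by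
    intro x hx
    constructor
    · linarith [hx.1]
    · linarith [hx.2]
  have hU := hrbUnif _ hKsub isCompact_Icc
  rw [Metric.tendstoUniformlyOn_iff] at hU
  have hU2 := hU (η/2) (by linarith)
  obtain ⟨σ, hσprop⟩ := (hU2.and (Ioo_mem_nhdsGT_of_mem (left_mem_Ico.2 he0))).exists
  obtain ⟨hσU, hσmem⟩ := hσprop
  have hσ0 : 0 < σ := hσmem.1
  have hσe : σ < e := hσmem.2
  have huIcc : u ∈ Icc (0:ℝ) 1 := ⟨le_trans hq0.le huq, by linarith [hq0]⟩
  -- the two-sided barrier bound, for every ε > 0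
  have hmain : ∀ ε : ℝ, 0 < ε → |rb e u - ρ0 u| ≤ η/2 + M*(e-σ)
      + Real.exp (e ^ ((1:ℝ)/3) / e ^ ((1:ℝ)/2) + (e-σ)/e - u / e ^ ((1:ℝ)/2))
      + Real.exp (e ^ ((1:ℝ)/3) / e ^ ((1:ℝ)/2) + (e-σ)/e - (1-u) / e ^ ((1:ℝ)/2))
      + ε*(e-σ) := by
    intro ε hε
    have hσU' : ∀ x ∈ Icc (e ^ ((1:ℝ)/3)) (1 - e ^ ((1:ℝ)/3)), dist (ρ0 x) (rb σ x) < η/2 :=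
      fun x hx => hσU x hx
    have h1 := barrier_bound T α β hα hβ ρ0 hρ0 hρ0r rb hrbRange hrbCont hrbSmooth hrbPDE
      hrbLeft hrbRight M hM hMb e σ (e ^ ((1:ℝ)/3)) (e ^ ((1:ℝ)/2)) η ε 1
      he0 heT' hσ0 hσe ha0 ha2 hs0 hss hη hε (Or.inl rfl) hσU' u huIcc
    have h2 := barrier_bound T α β hα hβ ρ0 hρ0 hρ0r rb hrbRange hrbCont hrbSmooth hrbPDE
      hrbLeft hrbRight M hM hMb e σ (e ^ ((1:ℝ)/3)) (e ^ ((1:ℝ)/2)) η ε (-1)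
      he0 heT' hσ0 hσe ha0 ha2 hs0 hss hη hε (Or.inr rfl) hσU' u huIcc
    rw [abs_le]
    constructor <;> nlinarith [h1, h2]
  -- pass to the limit ε → 0 and bound the exponentials
  have hfin : |rb e u - ρ0 u| ≤ η/2 + M*(e-σ)
      + Real.exp (e ^ ((1:ℝ)/3) / e ^ ((1:ℝ)/2) + (e-σ)/e - u / e ^ ((1:ℝ)/2))
      + Real.exp (e ^ ((1:ℝ)/3) / e ^ ((1:ℝ)/2) + (e-σ)/e - (1-u) / e ^ ((1:ℝ)/2)) := by
    apply le_of_forall_pos_le_add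
    intro ε' hε'
    have := hmain (ε' / (e - σ)) (div_pos hε' (by linarith))
    have heq : ε' / (e - σ) * (e - σ) = ε' := div_mul_cancel₀ _ (by linarith)
    linarith [this, heq.ge, heq.le]
  -- exponential bounds
  have hE1 : Real.exp (e ^ ((1:ℝ)/3) / e ^ ((1:ℝ)/2) + (e-σ)/e - u / e ^ ((1:ℝ)/2))
      ≤ Real.exp (1 + e ^ ((1:ℝ)/3) / e ^ ((1:ℝ)/2) - e ^ ((1:ℝ)/4) / e ^ ((1:ℝ)/2)) := by
    apply Real.exp_le_exp.2
    have h1 : (e-σ)/e ≤ 1 := by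
      rw [div_le_one he0]; linarith
    have h2 : e ^ ((1:ℝ)/4) / e ^ ((1:ℝ)/2) ≤ u / e ^ ((1:ℝ)/2) :=
      div_le_div_of_nonneg_right huq hs0.le
    linarith
  have hE2 : Real.exp (e ^ ((1:ℝ)/3) / e ^ ((1:ℝ)/2) + (e-σ)/e - (1-u) / e ^ ((1:ℝ)/2))
      ≤ Real.exp (1 + e ^ ((1:ℝ)/3) / e ^ ((1:ℝ)/2) - e ^ ((1:ℝ)/4) / e ^ ((1:ℝ)/2)) := by
    apply Real.exp_le_exp.2
    have h1 : (e-σ)/e ≤ 1 := by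
      rw [div_le_one he0]; linarith
    have h2 : e ^ ((1:ℝ)/4) / e ^ ((1:ℝ)/2) ≤ (1-u) / e ^ ((1:ℝ)/2) :=
      div_le_div_of_nonneg_right (by linarith) hs0.le
    linarith
  have hMe : M*(e-σ) ≤ M*e := mul_le_mul_of_nonneg_left (by linarith) hM
  have htaile := hsub ⟨he0, hee1⟩
  simp only [mem_setOf_eq] at htaile
  linarith [hfin, hE1, hE2, hMe, htaile]

/-- at small times the heat-equation solution in the interior stays
close to the initial profile. -/
theorem heat_solution_small_time_close_to_initial
    (T : ℝ) (hT : 0 < T) (α β : ℝ) (hα : α ∈ Set.Icc (0 : ℝ) 1)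
    (hβ : β ∈ Set.Icc (0 : ℝ) 1)
    (ρ0 : ℝ → ℝ) (hρ0 : ContDiffOn ℝ 2 ρ0 (Set.Icc 0 1))
    (hρ0r : ∀ u ∈ Set.Icc (0 : ℝ) 1, ρ0 u ∈ Set.Icc (0 : ℝ) 1)
    -- `rb` is the solution `ρ̄` of the heat equation with boundary data `α, β`
    (rb : ℝ → ℝ → ℝ)
    (hrbRange : ∀ t ∈ Set.Icc 0 T, ∀ u ∈ Set.Icc (0 : ℝ) 1, rb t u ∈ Set.Icc (0 : ℝ) 1)
    (hrbCont : ContinuousOn (fun q : ℝ × ℝ => rb q.1 q.2) (Set.Ioc 0 T ×ˢ Set.Icc 0 1))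
    (hrbSmooth : ContDiffOn ℝ (⊤ : ℕ∞) (fun q : ℝ × ℝ => rb q.1 q.2) (Set.Ioc 0 T ×ˢ Set.Ioo 0 1))
    (hrbPDE : ∀ t ∈ Set.Ioc 0 T, ∀ u ∈ Set.Ioo (0 : ℝ) 1,
      HasDerivAt (fun s => rb s u) (deriv (deriv (fun v => rb t v)) u) t)
    (hrbLeft : ∀ t ∈ Set.Ioc 0 T, rb t 0 = α)
    (hrbRight : ∀ t ∈ Set.Ioc 0 T, rb t 1 = β)
    (hrbInit : ∀ u ∈ Set.Icc (0 : ℝ) 1, rb 0 u = ρ0 u)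
    (hrbUnif : ∀ K : Set ℝ, K ⊆ Set.Ioo 0 1 → IsCompact K →
      TendstoUniformlyOn (fun t u => rb t u) ρ0 (nhdsWithin 0 (Set.Ioi 0)) K) :
    ∃ δfn : ℝ → ℝ, (∀ e ∈ Set.Ioo (0 : ℝ) 1, 0 ≤ δfn e) ∧
      Filter.Tendsto δfn (nhdsWithin 0 (Set.Ioi 0)) (nhds 0) ∧
      ∀ e : ℝ, 0 < e → e < min 1 T →
        ∀ u : ℝ, e ^ ((1 : ℝ) / 4) ≤ u → u ≤ 1 - e ^ ((1 : ℝ) / 4) →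
          |rb e u - ρ0 u| ≤ δfn e := by
  set S : ℝ → Set ℝ := fun e =>
    insert 0 ((fun u => |rb e u - ρ0 u|) '' Icc (e ^ ((1:ℝ)/4)) (1 - e ^ ((1:ℝ)/4))) with hS
  refine ⟨fun e => sSup (S e), ?_, ?_, ?_⟩
  · -- nonnegativity
    intro e _
    apply Real.sSup_nonneg
    rintro x (rfl | ⟨u, _, rfl⟩)
    · exact le_refl 0
    · exact abs_nonneg _
  · -- tendsto 0
    rw [Metric.tendsto_nhds]
    intro η hη
    obtain ⟨e₀, he₀, hC⟩ := claimC T α β hα hβ ρ0 hρ0 hρ0r rb hrbRange hrbCont hrbSmooth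
      hrbPDE hrbLeft hrbRight hrbUnif (show (0:ℝ) < η/2 by linarith)
    filter_upwards [Ioo_mem_nhdsGT_of_mem (left_mem_Ico.2 (lt_min he₀ (lt_min one_pos hT)))]
      with e he
    have he0 : 0 < e := he.1
    have he₀' : e < e₀ := lt_of_lt_of_le he.2 (min_le_left _ _)
    have heT : e < min 1 T := lt_of_lt_of_le he.2 (min_le_right _ _)
    have hub : ∀ x ∈ S e, x ≤ η/2 := by
      rintro x (rfl | ⟨u, hu, rfl⟩)
      · linarith
      · exact hC e he0 heT he₀' u hu.1 hu.2
    have hle : sSup (S e) ≤ η/2 := csSup_le ⟨0, mem_insert 0 _⟩ hub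
    have hge : 0 ≤ sSup (S e) := by
      apply Real.sSup_nonneg
      rintro x (rfl | ⟨u, _, rfl⟩)
      · exact le_refl 0
      · exact abs_nonneg _
    rw [Real.dist_eq]
    rw [abs_of_nonneg (by simpa using hge)]
    simp only [sub_zero]
    linarith
  · -- the bound
    intro e he0 heT u h1 h2
    apply le_csSup
    · -- bounded above by 1
      refine ⟨1, ?_⟩
      rintro x (rfl | ⟨v, hv, rfl⟩)
      · norm_num
      · have hq0 : (0:ℝ) < e ^ ((1:ℝ)/4) := Real.rpow_pos_of_pos he0 _
        have hvI : v ∈ Icc (0:ℝ) 1 := ⟨le_trans hq0.le hv.1, by linarith [hv.2]⟩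
        have hr := hrbRange e ⟨he0.le, (lt_of_lt_of_le heT (min_le_right _ _)).le⟩ v hvI
        have hρ := hρ0r v hvI
        rw [abs_le]
        constructor <;> [linarith [hr.1, hρ.2]; linarith [hr.2, hρ.1]]
    · exact mem_insert_of_mem _ ⟨u, ⟨h1, h2⟩, rfl⟩

end BoundaryDriven
end
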